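/- arXiv:2301.08345 — 8 statements merged into one kernel-verified Lean document; each statement's English description precedes it below -/
import Mathlib

section
/- Let f : ℝⁿ → ℝ and F : ℝⁿ → ℝᵐ be continuously differentiable and let x_{k−1}, x_k, x_{k+1} ∈ ℝⁿ, λ_k, λ_{k+1} ∈ ℝᵐ, β_k, β_{k+1} > 0, and constants σ, M_f, M_F, L_f, L_F > 0. Suppose the first-order stationarity conditions ∇f(x_{k+1}) + F'(x_k)ᵀλ_{k+1} + β_{k+1}(x_{k+1}−x_k) = 0 and ∇f(x_k) + F'(x_{k−1})ᵀλ_k + β_k(x_k−x_{k−1}) = 0 hold, that ‖F'(x_k)ᵀ v‖ ≥ σ‖v‖ and ‖F'(x_{k−1})ᵀ v‖ ≥ σ‖v‖ for all v ∈ ℝᵐ, and that ‖∇f(x)‖ ≤ M_f, ‖F'(x)‖ ≤ M_F, ‖∇f(x)−∇f(y)‖ ≤ L_f‖x−y‖ and ‖F'(x)−F'(y)‖ ≤ L_F‖x−y‖ at and between the points x_{k−1}, x_k, x_{k+1}. Then ‖λ_{k+1} − λ_k‖² ≤ c₁(β_{k+1})‖x_{k+1}−x_k‖² + c₂(β_k)‖x_k−x_{k−1}‖²,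 where c₁(β) = 2(L_f + β)²/σ² and c₂(β) = 2(M_f L_F + (2M_F + σ)β)²/σ⁴. -/
set_option maxHeartbeats 1000000 in
/-- Bound on the dual increment: under the first-order stationarity conditions of
two consecutive Linearized AL iterations, `σ_min(F') ≥ σ` and smoothness/boundedness
of the data at and between the points, one has
`‖λ_{k+1} − λ_k‖² ≤ c₁(β_{k+1})‖x_{k+1}−x_k‖² + c₂(β_k)‖x_k−x_{k−1}‖²` with
`c₁(β) = 2(L_f+β)²/σ²` and `c₂(β) = 2(M_f L_F + (2M_F+σ)β)²/σ⁴`. -/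
theorem stmt_3 (n m : ℕ)
    (f : EuclideanSpace ℝ (Fin n) → ℝ)
    (F : EuclideanSpace ℝ (Fin n) → EuclideanSpace ℝ (Fin m))
    (hf : ContDiff ℝ 1 f) (hF : ContDiff ℝ 1 F)
    (xkm xk xkp : EuclideanSpace ℝ (Fin n))
    (lamk lamkp : EuclideanSpace ℝ (Fin m))
    (βk βkp : ℝ) (hβk : 0 < βk) (hβkp : 0 < βkp)
    (σ M_f M_F L_f L_F : ℝ)
    (hσ : 0 < σ) (hMf : 0 < M_f) (hMF : 0 < M_F) (hLf : 0 < L_f) (hLF : 0 < L_F)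
    (hstat1 : gradient f xkp + ContinuousLinearMap.adjoint (fderiv ℝ F xk) lamkp +
        βkp • (xkp - xk) = 0)
    (hstat0 : gradient f xk + ContinuousLinearMap.adjoint (fderiv ℝ F xkm) lamk +
        βk • (xk - xkm) = 0)
    (hσmin1 : ∀ v : EuclideanSpace ℝ (Fin m),
      σ * ‖v‖ ≤ ‖ContinuousLinearMap.adjoint (fderiv ℝ F xk) v‖)
    (hσmin0 : ∀ v : EuclideanSpace ℝ (Fin m),
      σ * ‖v‖ ≤ ‖ContinuousLinearMap.adjoint (fderiv ℝ F xkm) v‖)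
    (hgradf : ∀ x ∈ convexHull ℝ ({xkm, xk, xkp} : Set (EuclideanSpace ℝ (Fin n))),
      ‖gradient f x‖ ≤ M_f)
    (hJ : ∀ x ∈ convexHull ℝ ({xkm, xk, xkp} : Set (EuclideanSpace ℝ (Fin n))),
      ‖fderiv ℝ F x‖ ≤ M_F)
    (hgradlip : ∀ x ∈ convexHull ℝ ({xkm, xk, xkp} : Set (EuclideanSpace ℝ (Fin n))),
      ∀ y ∈ convexHull ℝ ({xkm, xk, xkp} : Set (EuclideanSpace ℝ (Fin n))),
      ‖gradient f x - gradient f y‖ ≤ L_f * ‖x - y‖)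
    (hJlip : ∀ x ∈ convexHull ℝ ({xkm, xk, xkp} : Set (EuclideanSpace ℝ (Fin n))),
      ∀ y ∈ convexHull ℝ ({xkm, xk, xkp} : Set (EuclideanSpace ℝ (Fin n))),
      ‖fderiv ℝ F x - fderiv ℝ F y‖ ≤ L_F * ‖x - y‖) :
    ‖lamkp - lamk‖ ^ 2 ≤
      2 * (L_f + βkp) ^ 2 / σ ^ 2 * ‖xkp - xk‖ ^ 2 +
      2 * (M_f * L_F + (2 * M_F + σ) * βk) ^ 2 / σ ^ 4 * ‖xk - xkm‖ ^ 2 := by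
  classical
  set A := ContinuousLinearMap.adjoint (fderiv ℝ F xk) with hA
  set B := ContinuousLinearMap.adjoint (fderiv ℝ F xkm) with hB
  have hmem : ∀ z ∈ ({xkm, xk, xkp} : Set (EuclideanSpace ℝ (Fin n))),
      z ∈ convexHull ℝ ({xkm, xk, xkp} : Set (EuclideanSpace ℝ (Fin n))) :=
    fun z hz => subset_convexHull ℝ _ hz
  have hmkm := hmem xkm (by simp)
  have hmk := hmem xk (by simp)
  have hmkp := hmem xkp (by simp)
  have h1 : A lamkp = -(gradient f xkp + βkp • (xkp - xk)) := by
    apply eq_neg_of_add_eq_zero_left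
    rw [← hstat1]; abel
  have h2 : B lamk = -(gradient f xk + βk • (xk - xkm)) := by
    apply eq_neg_of_add_eq_zero_left
    rw [← hstat0]; abel
  set s := ‖xkp - xk‖ with hs
  set t := ‖xk - xkm‖ with ht
  have hs0 : 0 ≤ s := norm_nonneg _
  have ht0 : 0 ≤ t := norm_nonneg _
  -- bound on ‖A lamkp - B lamk‖
  have hd : A lamkp - B lamk =
      (gradient f xk - gradient f xkp) + (βk • (xk - xkm) - βkp • (xkp - xk)) := by
    rw [h1, h2]; module
  have hgl : ‖gradient f xk - gradient f xkp‖ ≤ L_f * s := by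
    have := hgradlip xk hmk xkp hmkp
    rwa [norm_sub_rev xk xkp, ← hs] at this
  have hdn : ‖A lamkp - B lamk‖ ≤ L_f * s + (βk * t + βkp * s) := by
    rw [hd]
    refine le_trans (norm_add_le _ _) (add_le_add hgl ?_)
    refine le_trans (norm_sub_le _ _) ?_
    rw [norm_smul, norm_smul, Real.norm_of_nonneg hβk.le, Real.norm_of_nonneg hβkp.le]
  -- bound on ‖lamk‖
  have hlamk : σ * ‖lamk‖ ≤ M_f + βk * t := by
    refine le_trans (hσmin0 lamk) ?_
    rw [show ContinuousLinearMap.adjoint (fderiv ℝ F xkm) lamk = B lamk from rfl, h2,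
      norm_neg]
    refine le_trans (norm_add_le _ _) (add_le_add (hgradf xk hmk) ?_)
    rw [norm_smul, Real.norm_of_nonneg hβk.le]
  -- bound on ‖B - A‖ two ways
  have hBA : B - A = ContinuousLinearMap.adjoint (fderiv ℝ F xkm - fderiv ℝ F xk) := by
    rw [hA, hB, map_sub]
  have hBAnorm : ‖B - A‖ = ‖fderiv ℝ F xkm - fderiv ℝ F xk‖ := by
    rw [hBA]
    exact LinearIsometryEquiv.norm_map (ContinuousLinearMap.adjoint) _
  have hBA1 : ‖B - A‖ ≤ L_F * t := by
    rw [hBAnorm]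
    have := hJlip xkm hmkm xk hmk
    rwa [norm_sub_rev xkm xk, ← ht] at this
  have hBA2 : ‖B - A‖ ≤ 2 * M_F := by
    rw [hBAnorm]
    refine le_trans (norm_sub_le _ _) ?_
    have := hJ xkm hmkm
    have := hJ xk hmk
    linarith
  have hBA0 : (0:ℝ) ≤ ‖B - A‖ := norm_nonneg _
  have hlamk0 : (0:ℝ) ≤ ‖lamk‖ := norm_nonneg _
  -- bound on σ * ‖(B - A) lamk‖
  have hmix : σ * ‖B lamk - A lamk‖ ≤ (M_f * L_F + 2 * M_F * βk) * t := by
    have e : B lamk - A lamk = (B - A) lamk := by simp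
    have h3 : ‖(B - A) lamk‖ ≤ ‖B - A‖ * ‖lamk‖ := ContinuousLinearMap.le_opNorm _ _
    have h4 : σ * (‖B - A‖ * ‖lamk‖) = ‖B - A‖ * (σ * ‖lamk‖) := by ring
    have h5 : ‖B - A‖ * (σ * ‖lamk‖) ≤ ‖B - A‖ * (M_f + βk * t) :=
      mul_le_mul_of_nonneg_left hlamk hBA0
    have h6 : ‖B - A‖ * (M_f + βk * t) ≤ L_F * t * M_f + 2 * M_F * (βk * t) := by
      have a1 : ‖B - A‖ * M_f ≤ L_F * t * M_f :=
        mul_le_mul_of_nonneg_right hBA1 hMf.le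
      have a2 : ‖B - A‖ * (βk * t) ≤ 2 * M_F * (βk * t) :=
        mul_le_mul_of_nonneg_right hBA2 (by positivity)
      rw [mul_add]
      exact add_le_add a1 a2
    rw [e]
    calc σ * ‖(B - A) lamk‖ ≤ σ * (‖B - A‖ * ‖lamk‖) :=
          mul_le_mul_of_nonneg_left h3 hσ.le
      _ = ‖B - A‖ * (σ * ‖lamk‖) := by ring
      _ ≤ ‖B - A‖ * (M_f + βk * t) := h5
      _ ≤ L_F * t * M_f + 2 * M_F * (βk * t) := h6
      _ = (M_f * L_F + 2 * M_F * βk) * t := by ring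
  -- main estimate
  have hmain : σ ^ 2 * ‖lamkp - lamk‖ ≤
      σ * (L_f + βkp) * s + (M_f * L_F + (2 * M_F + σ) * βk) * t := by
    have h7 : σ * ‖lamkp - lamk‖ ≤ ‖A (lamkp - lamk)‖ := hσmin1 _
    have h8 : A (lamkp - lamk) = (A lamkp - B lamk) + (B lamk - A lamk) := by
      rw [map_sub]; abel
    have h9 : ‖A (lamkp - lamk)‖ ≤ ‖A lamkp - B lamk‖ + ‖B lamk - A lamk‖ := by
      rw [h8]; exact norm_add_le _ _
    have h10 : σ * ‖lamkp - lamk‖ ≤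
        (L_f * s + (βk * t + βkp * s)) + ‖B lamk - A lamk‖ := by
      linarith
    calc σ ^ 2 * ‖lamkp - lamk‖ = σ * (σ * ‖lamkp - lamk‖) := by ring
      _ ≤ σ * ((L_f * s + (βk * t + βkp * s)) + ‖B lamk - A lamk‖) :=
          mul_le_mul_of_nonneg_left h10 hσ.le
      _ = σ * (L_f * s + (βk * t + βkp * s)) + σ * ‖B lamk - A lamk‖ := by ring
      _ ≤ σ * (L_f * s + (βk * t + βkp * s)) + (M_f * L_F + 2 * M_F * βk) * t := by
          linarith [hmix]
      _ = σ * (L_f + βkp) * s + (M_f * L_F + (2 * M_F + σ) * βk) * t := by ring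
  -- conclude by squaring
  set L := ‖lamkp - lamk‖ with hL
  have hL0 : 0 ≤ L := norm_nonneg _
  set a := L_f + βkp with ha
  set b := M_f * L_F + (2 * M_F + σ) * βk with hb
  have ha0 : 0 < a := by positivity
  have hb0 : 0 < b := by positivity
  have hσ4 : (0:ℝ) < σ ^ 4 := by positivity
  have hmain' : σ ^ 2 * L ≤ σ * a * s + b * t := hmain
  have hsq : (σ ^ 2 * L) ^ 2 ≤ (σ * a * s + b * t) ^ 2 :=
    pow_le_pow_left₀ (by positivity) hmain' 2
  have key : σ ^ 4 * L ^ 2 ≤ 2 * a ^ 2 * σ ^ 2 * s ^ 2 + 2 * b ^ 2 * t ^ 2 := by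
    nlinarith [sq_nonneg (σ * a * s - b * t), hsq]
  have goal_eq : 2 * a ^ 2 / σ ^ 2 * s ^ 2 + 2 * b ^ 2 / σ ^ 4 * t ^ 2 =
      (2 * a ^ 2 * σ ^ 2 * s ^ 2 + 2 * b ^ 2 * t ^ 2) / σ ^ 4 := by
    field_simp
  rw [goal_eq, le_div_iff₀ hσ4]
  linarith [key]
end

section
/- Let f : ℝⁿ → ℝ and F : ℝⁿ → ℝᵐ be continuously differentiable, ρ > 0, α ∈ (0,1), η > 1, σ, M_F > 0 with ρ ≥ (4M_F²/σ²)^η, and define c₁(β) = 2(L_f+β)²/σ², c₂(β) = 2(M_f L_F + (2M_F+σ)β)²/σ⁴ for given L_f, M_f, L_F > 0. Let x_{k−1}, x_k, x_{k+1} ∈ ℝⁿ, λ_{k−1}, λ_k, λ_{k+1} ∈ ℝᵐ, β_k, β_{k+1} > 0 and γ_k, γ_{k+1} > 0 satisfy: (i) the descent L_ρ(x_{k+1},λ_k) ≤ L_ρ(x_k,λ_k) − ((ρσ² + αβ_{k+1})/2)‖x_{k+1}−x_k‖²; (ii) λ_{k+1} − λ_k = ρ(F(x_k) + F'(x_k)(x_{k+1}−x_k));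 (iii) ‖F(x_{k+1}) − F(x_k) − F'(x_k)(x_{k+1}−x_k)‖ ≤ 2M_F‖x_{k+1}−x_k‖; (iv) ‖λ_{k+1} − λ_k‖² ≤ c₁(β_{k+1})‖x_{k+1}−x_k‖² + c₂(β_k)‖x_k−x_{k−1}‖²; (v) γ_j = 4(1/(2ρ^{(η−1)/η}) + 1/ρ)·max{c₁(β_j), c₂(β_j)} and γ_j ≤ αβ_j/2 for j ∈ {k, k+1}. Then, writing P_j = L_ρ(x_j,λ_j) + (γ_j/2)‖x_j − x_{j−1}‖², one has P_{k+1} − P_k ≤ −(γ_{k+1}/4)‖x_{k+1}−x_k‖² − (γ_k/4)‖x_k−x_{k−1}‖². -/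
/-!
The dual step is `λ_{k+1} − λ_k = ρ w` with `w` the linearization of `F` at `x_k`, so
`F(x_{k+1}) = (λ_{k+1} − λ_k)/ρ + e` with a linearization error `‖e‖ ≤ 2 M_F ‖x_{k+1} − x_k‖`.
Hence the change of `L_ρ` in the multiplier is `‖Δλ‖²/ρ + ⟨Δλ, e⟩`, which Young's inequality with
weight `t = ρ^{(η−1)/η}` bounds by `(1/(2t) + 1/ρ)‖Δλ‖² + (t/2)‖e‖²`. The choice of `γ_j` absorbs
the first term through the bound (iv) on `‖Δλ‖²`, and `ρ ≥ (4M_F²/σ²)^η` makes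
`(t/2)‖e‖² ≤ (ρσ²/2)‖x_{k+1} − x_k‖²`, which the primal descent (i) absorbs together with
`γ_{k+1} ≤ αβ_{k+1}/2`.
-/

open scoped RealInnerProductSpace

theorem mul_le_sq_div_add_mul_sq (x y : ℝ) {t : ℝ} (ht : 0 < t) :
    x * y ≤ x ^ 2 / (2 * t) + t / 2 * y ^ 2 := by
  have hform : x ^ 2 / (2 * t) + t / 2 * y ^ 2 = (x ^ 2 + t ^ 2 * y ^ 2) / (2 * t) := by
    field_simp
  rw [hform, le_div_iff₀ (by positivity)]
  nlinarith [sq_nonneg (x - t * y)]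

theorem mul_rpow_sub_one_div_le {c ρ η : ℝ} (hc : 0 ≤ c) (hρ : 0 < ρ) (hη : 0 < η)
    (h : c ^ η ≤ ρ) : c * ρ ^ ((η - 1) / η) ≤ ρ := by
  have hc' : c ≤ ρ ^ η⁻¹ := (Real.le_rpow_inv_iff_of_pos hc hρ.le hη).2 h
  calc c * ρ ^ ((η - 1) / η) ≤ ρ ^ η⁻¹ * ρ ^ ((η - 1) / η) := by gcongr
    _ = ρ := by
      rw [← Real.rpow_add hρ, show η⁻¹ + (η - 1) / η = 1 by field_simp; ring, Real.rpow_one]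

theorem real_inner_le_of_eq_smul {E : Type*} [NormedAddCommGroup E] [InnerProductSpace ℝ E]
    {ρ t : ℝ} (hρ : 0 < ρ) (ht : 0 < t) {d w : E} (hd : d = ρ • w) (y : E) :
    ⟪d, y⟫ ≤ (1 / (2 * t) + 1 / ρ) * ‖d‖ ^ 2 + t / 2 * ‖y - w‖ ^ 2 := by
  have hy : y = ρ⁻¹ • d + (y - w) := by
    rw [hd, smul_smul, inv_mul_cancel₀ hρ.ne', one_smul]
    abel
  calc ⟪d, y⟫ = ρ⁻¹ * ‖d‖ ^ 2 + ⟪d, y - w⟫ := by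
        conv_lhs => rw [hy]
        rw [inner_add_right, real_inner_smul_right, real_inner_self_eq_norm_sq]
    _ ≤ ρ⁻¹ * ‖d‖ ^ 2 + ‖d‖ * ‖y - w‖ := by gcongr; exact real_inner_le_norm _ _
    _ ≤ ρ⁻¹ * ‖d‖ ^ 2 + (‖d‖ ^ 2 / (2 * t) + t / 2 * ‖y - w‖ ^ 2) := by
        gcongr; exact mul_le_sq_div_add_mul_sq _ _ ht
    _ = (1 / (2 * t) + 1 / ρ) * ‖d‖ ^ 2 + t / 2 * ‖y - w‖ ^ 2 := by ring

theorem stmt_7_general (n m : ℕ)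
    (f : EuclideanSpace ℝ (Fin n) → ℝ)
    (F : EuclideanSpace ℝ (Fin n) → EuclideanSpace ℝ (Fin m))
    (ρ : ℝ) (hρ : 0 < ρ) (α : ℝ)
    (η : ℝ) (hη : 1 < η) (σ M_F : ℝ) (hσ : 0 < σ)
    (hρbig : (4 * M_F ^ 2 / σ ^ 2) ^ η ≤ ρ)
    (L_f M_f L_F : ℝ)
    (xkm xk xkp : EuclideanSpace ℝ (Fin n))
    (lamk lamkp : EuclideanSpace ℝ (Fin m))
    (βk βkp γk γkp : ℝ)
    -- (i) descent of the augmented Lagrangian in the primal variables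
    (hdescent :
      f xkp + ⟪lamk, F xkp⟫ + ρ / 2 * ‖F xkp‖ ^ 2 ≤
        f xk + ⟪lamk, F xk⟫ + ρ / 2 * ‖F xk‖ ^ 2 -
          (ρ * σ ^ 2 + α * βkp) / 2 * ‖xkp - xk‖ ^ 2)
    -- (ii) dual update
    (hdual : lamkp - lamk = ρ • (F xk + fderiv ℝ F xk (xkp - xk)))
    -- (iii) linearization error bound
    (hlin : ‖F xkp - F xk - fderiv ℝ F xk (xkp - xk)‖ ≤ 2 * M_F * ‖xkp - xk‖)
    -- (iv) bound on the dual increment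
    (hlam : ‖lamkp - lamk‖ ^ 2 ≤
        2 * (L_f + βkp) ^ 2 / σ ^ 2 * ‖xkp - xk‖ ^ 2 +
        2 * (M_f * L_F + (2 * M_F + σ) * βk) ^ 2 / σ ^ 4 * ‖xk - xkm‖ ^ 2)
    -- (v) choice of the proximal weights γ
    (hγkdef : γk = 4 * (1 / (2 * ρ ^ ((η - 1) / η)) + 1 / ρ) *
        max (2 * (L_f + βk) ^ 2 / σ ^ 2)
          (2 * (M_f * L_F + (2 * M_F + σ) * βk) ^ 2 / σ ^ 4))
    (hγkpdef : γkp = 4 * (1 / (2 * ρ ^ ((η - 1) / η)) + 1 / ρ) *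
        max (2 * (L_f + βkp) ^ 2 / σ ^ 2)
          (2 * (M_f * L_F + (2 * M_F + σ) * βkp) ^ 2 / σ ^ 4))
    (hγkple : γkp ≤ α * βkp / 2) :
    (f xkp + ⟪lamkp, F xkp⟫ + ρ / 2 * ‖F xkp‖ ^ 2 + γkp / 2 * ‖xkp - xk‖ ^ 2) -
      (f xk + ⟪lamk, F xk⟫ + ρ / 2 * ‖F xk‖ ^ 2 + γk / 2 * ‖xk - xkm‖ ^ 2) ≤
      -(γkp / 4) * ‖xkp - xk‖ ^ 2 - γk / 4 * ‖xk - xkm‖ ^ 2 := by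
  set t := ρ ^ ((η - 1) / η)
  set C := 1 / (2 * t) + 1 / ρ
  have ht : 0 < t := by positivity
  have hdual_term : ⟪lamkp, F xkp⟫ - ⟪lamk, F xkp⟫ ≤
      C * ‖lamkp - lamk‖ ^ 2 + t / 2 * ‖F xkp - F xk - fderiv ℝ F xk (xkp - xk)‖ ^ 2 := by
    rw [← inner_sub_left, sub_sub]
    exact real_inner_le_of_eq_smul hρ ht hdual _
  have hC_term : C * ‖lamkp - lamk‖ ^ 2 ≤ γkp / 4 * ‖xkp - xk‖ ^ 2 + γk / 4 * ‖xk - xkm‖ ^ 2 := by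
    calc C * ‖lamkp - lamk‖ ^ 2
        ≤ C * (2 * (L_f + βkp) ^ 2 / σ ^ 2 * ‖xkp - xk‖ ^ 2 +
            2 * (M_f * L_F + (2 * M_F + σ) * βk) ^ 2 / σ ^ 4 * ‖xk - xkm‖ ^ 2) := by gcongr
      _ ≤ C * (max (2 * (L_f + βkp) ^ 2 / σ ^ 2)
              (2 * (M_f * L_F + (2 * M_F + σ) * βkp) ^ 2 / σ ^ 4) * ‖xkp - xk‖ ^ 2 +
            max (2 * (L_f + βk) ^ 2 / σ ^ 2)
              (2 * (M_f * L_F + (2 * M_F + σ) * βk) ^ 2 / σ ^ 4) * ‖xk - xkm‖ ^ 2) := by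
          gcongr
          exacts [le_max_left _ _, le_max_right _ _]
      _ = _ := by rw [hγkdef, hγkpdef]; ring
  have herr_term : t / 2 * ‖F xkp - F xk - fderiv ℝ F xk (xkp - xk)‖ ^ 2 ≤
      ρ * σ ^ 2 / 2 * ‖xkp - xk‖ ^ 2 := by
    have hkey : 4 * M_F ^ 2 / σ ^ 2 * t ≤ ρ :=
      mul_rpow_sub_one_div_le (by positivity) hρ (by linarith) hρbig
    calc t / 2 * ‖F xkp - F xk - fderiv ℝ F xk (xkp - xk)‖ ^ 2
        ≤ t / 2 * (2 * M_F * ‖xkp - xk‖) ^ 2 := by gcongr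
      _ = σ ^ 2 / 2 * (4 * M_F ^ 2 / σ ^ 2 * t) * ‖xkp - xk‖ ^ 2 := by field_simp; ring
      _ ≤ σ ^ 2 / 2 * ρ * ‖xkp - xk‖ ^ 2 := by gcongr
      _ = ρ * σ ^ 2 / 2 * ‖xkp - xk‖ ^ 2 := by ring
  have hγ_term : γkp * ‖xkp - xk‖ ^ 2 ≤ α * βkp / 2 * ‖xkp - xk‖ ^ 2 := by gcongr
  linarith

/-- Decrease of the Lyapunov function `P_j = L_ρ(x_j,λ_j) + (γ_j/2)‖x_j−x_{j−1}‖²`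
along Linearized AL iterates:
`P_{k+1} − P_k ≤ −(γ_{k+1}/4)‖x_{k+1}−x_k‖² − (γ_k/4)‖x_k−x_{k−1}‖²`. -/
theorem stmt_7 (n m : ℕ)
    (f : EuclideanSpace ℝ (Fin n) → ℝ)
    (F : EuclideanSpace ℝ (Fin n) → EuclideanSpace ℝ (Fin m))
    (hf : ContDiff ℝ 1 f) (hF : ContDiff ℝ 1 F)
    (ρ : ℝ) (hρ : 0 < ρ) (α : ℝ) (hα : α ∈ Set.Ioo (0 : ℝ) 1)
    (η : ℝ) (hη : 1 < η) (σ M_F : ℝ) (hσ : 0 < σ) (hMF : 0 < M_F)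
    (hρbig : (4 * M_F ^ 2 / σ ^ 2) ^ η ≤ ρ)
    (L_f M_f L_F : ℝ) (hLf : 0 < L_f) (hMf : 0 < M_f) (hLF : 0 < L_F)
    (xkm xk xkp : EuclideanSpace ℝ (Fin n))
    (lamkm lamk lamkp : EuclideanSpace ℝ (Fin m))
    (βk βkp γk γkp : ℝ) (hβk : 0 < βk) (hβkp : 0 < βkp)
    (hγk : 0 < γk) (hγkp : 0 < γkp)
    -- (i) descent of the augmented Lagrangian in the primal variables
    (hdescent :
      f xkp + ⟪lamk, F xkp⟫ + ρ / 2 * ‖F xkp‖ ^ 2 ≤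
        f xk + ⟪lamk, F xk⟫ + ρ / 2 * ‖F xk‖ ^ 2 -
          (ρ * σ ^ 2 + α * βkp) / 2 * ‖xkp - xk‖ ^ 2)
    -- (ii) dual update
    (hdual : lamkp - lamk = ρ • (F xk + fderiv ℝ F xk (xkp - xk)))
    -- (iii) linearization error bound
    (hlin : ‖F xkp - F xk - fderiv ℝ F xk (xkp - xk)‖ ≤ 2 * M_F * ‖xkp - xk‖)
    -- (iv) bound on the dual increment
    (hlam : ‖lamkp - lamk‖ ^ 2 ≤
        2 * (L_f + βkp) ^ 2 / σ ^ 2 * ‖xkp - xk‖ ^ 2 +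
        2 * (M_f * L_F + (2 * M_F + σ) * βk) ^ 2 / σ ^ 4 * ‖xk - xkm‖ ^ 2)
    -- (v) choice of the proximal weights γ
    (hγkdef : γk = 4 * (1 / (2 * ρ ^ ((η - 1) / η)) + 1 / ρ) *
        max (2 * (L_f + βk) ^ 2 / σ ^ 2)
          (2 * (M_f * L_F + (2 * M_F + σ) * βk) ^ 2 / σ ^ 4))
    (hγkpdef : γkp = 4 * (1 / (2 * ρ ^ ((η - 1) / η)) + 1 / ρ) *
        max (2 * (L_f + βkp) ^ 2 / σ ^ 2)
          (2 * (M_f * L_F + (2 * M_F + σ) * βkp) ^ 2 / σ ^ 4))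
    (hγkle : γk ≤ α * βk / 2) (hγkple : γkp ≤ α * βkp / 2) :
    (f xkp + ⟪lamkp, F xkp⟫ + ρ / 2 * ‖F xkp‖ ^ 2 + γkp / 2 * ‖xkp - xk‖ ^ 2) -
      (f xk + ⟪lamk, F xk⟫ + ρ / 2 * ‖F xk‖ ^ 2 + γk / 2 * ‖xk - xkm‖ ^ 2) ≤
      -(γkp / 4) * ‖xkp - xk‖ ^ 2 - γk / 4 * ‖xk - xkm‖ ^ 2 :=
  stmt_7_general n m f F ρ hρ α η hη σ M_F hσ hρbig L_f M_f L_F xkm xk xkp lamk lamkp βk βkp γk γkp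
    hdescent hdual hlin hlam hγkdef hγkpdef hγkple
end

section
/- Let f : ℝⁿ → ℝ and F : ℝⁿ → ℝᵐ be continuously differentiable, ρ > 0, and let (x_k)_{k≥0} ⊂ ℝⁿ, (λ_k)_{k≥0} ⊂ ℝᵐ, (γ_k)_{k≥1} ⊂ ℝ with γ_k ≥ γ̲ > 0, and constants Γ ≥ 0, L̄ ∈ ℝ be such that, with P_k = L_ρ(x_k,λ_k) + (γ_k/2)‖x_k−x_{k−1}‖²: (i) P_{k+1} − P_k ≤ −(γ_{k+1}/4)‖x_{k+1}−x_k‖² − (γ_k/4)‖x_k−x_{k−1}‖² for all k ≥ 1; (ii) P_k ≥ L̄ − 1 for all k ≥ 1; (iii) ‖∇L_ρ(x_k,λ_k)‖ ≤ Γ(‖x_k−x_{k−1}‖ + ‖x_{k−1}−x_{k−2}‖) for all k ≥ 2. Then ‖x_k − x_{k−1}‖ → 0 as k → ∞, and any limit point (x*,λ*) of the sequence ((x_k,λ_k))_{k≥1} satisfies ∇f(x*) + F'(x*)ᵀλ* = 0 and F(x*) = 0, i.e. is a first-order (stationary) point of the problem min f(x) s.t. F(x) = 0. -/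
open scoped RealInnerProductSpace
open Filter Topology

/-!
Shifting the index by one, the Lyapunov values `P_{k+1}` decrease by at least
`(γ̲/4)‖x_{k+1} - x_k‖²` per step and are bounded below, so they converge and the increments
tend to zero. Hypothesis (iii) then forces the residual `∇L_ρ(x_k, λ_k)` to zero, and by
continuity of `∇L_ρ` it vanishes at every limit point; there `F(x*) = 0`, so the `ρ F(x*)`
part of the multiplier drops out.
-/

theorem tendsto_zero_of_sufficient_decrease {P d : ℕ → ℝ} {c : ℝ} (hc : 0 < c)
    (hdec : ∀ k, P (k + 1) + c * d k ^ 2 ≤ P k) (hbdd : BddBelow (Set.range P)) :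
    Tendsto d atTop (𝓝 0) := by
  have hanti : Antitone P := antitone_nat_of_succ_le fun k => by
    nlinarith [hdec k, sq_nonneg (d k)]
  have hP := tendsto_atTop_ciInf hanti hbdd
  have hstep : Tendsto (fun k => (P k - P (k + 1)) / c) atTop (𝓝 0) := by
    simpa using (hP.sub (hP.comp (tendsto_add_atTop_nat 1))).div_const c
  rw [tendsto_zero_iff_abs_tendsto_zero]
  refine squeeze_zero (fun k => abs_nonneg _) (fun k => ?_) (by simpa using hstep.sqrt)
  refine Real.abs_le_sqrt ((le_div_iff₀ hc).2 ?_)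
  linarith [hdec k]

theorem tendsto_zero_of_sqrt_norm_sq_add_norm_sq {α E H : Type*} [SeminormedAddCommGroup E]
    [SeminormedAddCommGroup H] {l : Filter α} {u : α → E} {v : α → H}
    (h : Tendsto (fun k => √(‖u k‖ ^ 2 + ‖v k‖ ^ 2)) l (𝓝 0)) :
    Tendsto u l (𝓝 0) ∧ Tendsto v l (𝓝 0) := by
  constructor <;> rw [tendsto_zero_iff_norm_tendsto_zero] <;>
    refine squeeze_zero (fun k => norm_nonneg _) (fun k => ?_) h
  · simpa using Real.abs_le_sqrt (x := ‖u k‖) (le_add_of_nonneg_right (sq_nonneg ‖v k‖))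
  · simpa using Real.abs_le_sqrt (x := ‖v k‖) (le_add_of_nonneg_left (sq_nonneg ‖u k‖))

theorem eq_of_tendsto_comp_of_tendsto_subseq {X Y : Type*} [TopologicalSpace X]
    [TopologicalSpace Y] [T2Space Y] {g : X → Y} {a : X} {b : Y} (hg : ContinuousAt g a)
    {u : ℕ → X} (hu : Tendsto (g ∘ u) atTop (𝓝 b)) {φ : ℕ → ℕ} (hφ : StrictMono φ)
    (ha : Tendsto (u ∘ φ) atTop (𝓝 a)) : g a = b :=
  tendsto_nhds_unique (hg.tendsto.comp ha) (hu.comp hφ.tendsto_atTop)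

section AugmentedLagrangian

variable {E H : Type*} [NormedAddCommGroup E] [InnerProductSpace ℝ E] [CompleteSpace E]
  [NormedAddCommGroup H] [InnerProductSpace ℝ H] [CompleteSpace H]

noncomputable def augLagrangianGradX (f : E → ℝ) (F : E → H) (ρ : ℝ) (p : E × H) : E :=
  gradient f p.1 + ContinuousLinearMap.adjoint (fderiv ℝ F p.1) (p.2 + ρ • F p.1)

theorem ContDiff.continuous_gradient {f : E → ℝ} (hf : ContDiff ℝ 1 f) :
    Continuous (gradient f) :=
  (InnerProductSpace.toDual ℝ E).symm.continuous.comp (hf.continuous_fderiv one_ne_zero)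

theorem continuous_augLagrangianGradX {f : E → ℝ} {F : E → H} (hf : ContDiff ℝ 1 f)
    (hF : ContDiff ℝ 1 F) (ρ : ℝ) : Continuous (augLagrangianGradX f F ρ) := by
  have hadj : Continuous fun y => ContinuousLinearMap.adjoint (fderiv ℝ F y) :=
    ContinuousLinearMap.adjoint.continuous.comp (hF.continuous_fderiv one_ne_zero)
  exact (hf.continuous_gradient.comp continuous_fst).add <| (hadj.comp continuous_fst).clm_apply
    (continuous_snd.add ((hF.continuous.comp continuous_fst).const_smul ρ))

end AugmentedLagrangian

theorem stmt_8_general (n m : ℕ)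
    (f : EuclideanSpace ℝ (Fin n) → ℝ)
    (F : EuclideanSpace ℝ (Fin n) → EuclideanSpace ℝ (Fin m))
    (hf : ContDiff ℝ 1 f) (hF : ContDiff ℝ 1 F)
    (ρ : ℝ)
    (x : ℕ → EuclideanSpace ℝ (Fin n)) (lam : ℕ → EuclideanSpace ℝ (Fin m))
    (γ : ℕ → ℝ) (γlow : ℝ) (hγlow : 0 < γlow) (hγ : ∀ k ≥ 1, γlow ≤ γ k)
    (Γ : ℝ) (Lbar : ℝ)
    (hdecrease : ∀ k ≥ 1,
      (f (x (k + 1)) + ⟪lam (k + 1), F (x (k + 1))⟫ + ρ / 2 * ‖F (x (k + 1))‖ ^ 2 +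
          γ (k + 1) / 2 * ‖x (k + 1) - x k‖ ^ 2) -
        (f (x k) + ⟪lam k, F (x k)⟫ + ρ / 2 * ‖F (x k)‖ ^ 2 +
          γ k / 2 * ‖x k - x (k - 1)‖ ^ 2) ≤
        -(γ (k + 1) / 4) * ‖x (k + 1) - x k‖ ^ 2 - γ k / 4 * ‖x k - x (k - 1)‖ ^ 2)
    (hbelow : ∀ k ≥ 1,
      Lbar - 1 ≤ f (x k) + ⟪lam k, F (x k)⟫ + ρ / 2 * ‖F (x k)‖ ^ 2 +
        γ k / 2 * ‖x k - x (k - 1)‖ ^ 2)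
    (hgradbound : ∀ k ≥ 2,
      Real.sqrt
          (‖gradient f (x k) + ContinuousLinearMap.adjoint (fderiv ℝ F (x k))
              (lam k + ρ • F (x k))‖ ^ 2 + ‖F (x k)‖ ^ 2) ≤
        Γ * (‖x k - x (k - 1)‖ + ‖x (k - 1) - x (k - 2)‖)) :
    Filter.Tendsto (fun k => ‖x k - x (k - 1)‖) Filter.atTop (nhds 0) ∧
    ∀ (xs : EuclideanSpace ℝ (Fin n)) (lams : EuclideanSpace ℝ (Fin m)),
      (∃ φ : ℕ → ℕ, StrictMono φ ∧ (∀ k, 1 ≤ φ k) ∧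
        Filter.Tendsto (fun k => (x (φ k), lam (φ k))) Filter.atTop (nhds (xs, lams))) →
      gradient f xs + ContinuousLinearMap.adjoint (fderiv ℝ F xs) lams = 0 ∧
        F xs = 0 := by
  set Δ : ℕ → ℝ := fun k => ‖x k - x (k - 1)‖
  set P : ℕ → ℝ := fun k => f (x k) + ⟪lam k, F (x k)⟫ + ρ / 2 * ‖F (x k)‖ ^ 2 +
      γ k / 2 * Δ k ^ 2
  have hsuff : ∀ k, P (k + 1 + 1) + γlow / 4 * Δ (k + 1) ^ 2 ≤ P (k + 1) := fun k => by
    have hγ₂ : 0 ≤ γ (k + 1 + 1) := hγlow.le.trans (hγ _ (by omega))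
    have : γlow / 4 * Δ (k + 1) ^ 2 ≤ γ (k + 1) / 4 * Δ (k + 1) ^ 2 := by
      gcongr; exact hγ _ (by omega)
    have h := hdecrease (k + 1) (by omega)
    simp only [P, Δ, Nat.add_sub_cancel] at h this ⊢
    linarith [mul_nonneg hγ₂ (sq_nonneg ‖x (k + 1 + 1) - x (k + 1)‖)]
  have hΔ : Tendsto Δ atTop (𝓝 0) := (tendsto_add_atTop_iff_nat 1).1 <|
    tendsto_zero_of_sufficient_decrease (P := fun k => P (k + 1)) (by positivity) hsuff
      ⟨Lbar - 1, by rintro _ ⟨k, rfl⟩; exact hbelow (k + 1) (by omega)⟩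
  refine ⟨hΔ, ?_⟩
  have hres : Tendsto
      (fun k => √(‖augLagrangianGradX f F ρ (x k, lam k)‖ ^ 2 + ‖F (x k)‖ ^ 2))
      atTop (𝓝 0) := by
    have hbound : Tendsto (fun k => Γ * (Δ k + Δ (k - 1))) atTop (𝓝 0) := by
      simpa using (hΔ.add (hΔ.comp (tendsto_sub_atTop_nat 1))).const_mul Γ
    refine squeeze_zero' (.of_forall fun k => Real.sqrt_nonneg _) ?_ hbound
    filter_upwards [eventually_ge_atTop 2] with k hk using hgradbound k hk
  obtain ⟨hGrad, hFeas⟩ := tendsto_zero_of_sqrt_norm_sq_add_norm_sq hres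
  rintro xs lams ⟨φ, hφ, -, hlim⟩
  have hFxs : F xs = 0 := eq_of_tendsto_comp_of_tendsto_subseq (u := x)
    hF.continuous.continuousAt hFeas hφ ((continuous_fst.tendsto _).comp hlim)
  have hGxs : augLagrangianGradX f F ρ (xs, lams) = 0 :=
    eq_of_tendsto_comp_of_tendsto_subseq (u := fun k => (x k, lam k))
      (continuous_augLagrangianGradX hf hF ρ).continuousAt hGrad hφ hlim
  rw [augLagrangianGradX, hFxs, smul_zero, add_zero] at hGxs
  exact ⟨hGxs, hFxs⟩

/-- Global asymptotic convergence: under the decrease and lower boundedness of the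
Lyapunov function `P_k` and the gradient bound on `∇L_ρ`, the primal increments
vanish and every limit point `(x*,λ*)` of the iterates is a stationary point,
i.e. `∇f(x*) + F'(x*)ᵀλ* = 0` and `F(x*) = 0`. -/
theorem stmt_8 (n m : ℕ)
    (f : EuclideanSpace ℝ (Fin n) → ℝ)
    (F : EuclideanSpace ℝ (Fin n) → EuclideanSpace ℝ (Fin m))
    (hf : ContDiff ℝ 1 f) (hF : ContDiff ℝ 1 F)
    (ρ : ℝ) (hρ : 0 < ρ)
    (x : ℕ → EuclideanSpace ℝ (Fin n)) (lam : ℕ → EuclideanSpace ℝ (Fin m))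
    (γ : ℕ → ℝ) (γlow : ℝ) (hγlow : 0 < γlow) (hγ : ∀ k ≥ 1, γlow ≤ γ k)
    (Γ : ℝ) (hΓ : 0 ≤ Γ) (Lbar : ℝ)
    (hdecrease : ∀ k ≥ 1,
      (f (x (k + 1)) + ⟪lam (k + 1), F (x (k + 1))⟫ + ρ / 2 * ‖F (x (k + 1))‖ ^ 2 +
          γ (k + 1) / 2 * ‖x (k + 1) - x k‖ ^ 2) -
        (f (x k) + ⟪lam k, F (x k)⟫ + ρ / 2 * ‖F (x k)‖ ^ 2 +
          γ k / 2 * ‖x k - x (k - 1)‖ ^ 2) ≤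
        -(γ (k + 1) / 4) * ‖x (k + 1) - x k‖ ^ 2 - γ k / 4 * ‖x k - x (k - 1)‖ ^ 2)
    (hbelow : ∀ k ≥ 1,
      Lbar - 1 ≤ f (x k) + ⟪lam k, F (x k)⟫ + ρ / 2 * ‖F (x k)‖ ^ 2 +
        γ k / 2 * ‖x k - x (k - 1)‖ ^ 2)
    (hgradbound : ∀ k ≥ 2,
      Real.sqrt
          (‖gradient f (x k) + ContinuousLinearMap.adjoint (fderiv ℝ F (x k))
              (lam k + ρ • F (x k))‖ ^ 2 + ‖F (x k)‖ ^ 2) ≤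
        Γ * (‖x k - x (k - 1)‖ + ‖x (k - 1) - x (k - 2)‖)) :
    Filter.Tendsto (fun k => ‖x k - x (k - 1)‖) Filter.atTop (nhds 0) ∧
    ∀ (xs : EuclideanSpace ℝ (Fin n)) (lams : EuclideanSpace ℝ (Fin m)),
      (∃ φ : ℕ → ℕ, StrictMono φ ∧ (∀ k, 1 ≤ φ k) ∧
        Filter.Tendsto (fun k => (x (φ k), lam (φ k))) Filter.atTop (nhds (xs, lams))) →
      gradient f xs + ContinuousLinearMap.adjoint (fderiv ℝ F xs) lams = 0 ∧
        F xs = 0 :=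
  stmt_8_general n m f F hf hF ρ x lam γ γlow hγlow hγ Γ Lbar hdecrease hbelow hgradbound
end

section
/- Let f : ℝⁿ → ℝ and F : ℝⁿ → ℝᵐ be differentiable, ρ > 0, and define P : ℝⁿ × ℝᵐ × ℝⁿ × ℝ → ℝ by P(x,λ,y,γ) = f(x) + ⟨λ,F(x)⟩ + (ρ/2)‖F(x)‖² + (γ/2)‖x−y‖². If (x,λ,y,γ) with γ > 0 is a critical point of P, i.e. the (Fréchet) derivative of P vanishes at (x,λ,y,γ), then x = y, F(x) = 0, and ∇f(x) + F'(x)ᵀλ = 0; in particular (x,λ) is a first-order (stationary) point of the problem min f(x) s.t. F(x) = 0. -/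
/-!
Each partial derivative of `P` is read off as the derivative of `P` along a line through the
critical point. In the direction of `γ` it is `‖x - y‖² / 2`, and in the direction `(0, F x, 0, 0)`
it is `‖F x‖²`; both vanish, so `x = y` and `F x = 0`. Then the penalty and proximal terms
contribute nothing to the derivative in a direction `(v, 0, 0, 0)`, which reduces to
`⟪∇f(x) + F'(x)ᵀλ, v⟫`.
-/

open scoped RealInnerProductSpace

theorem HasDerivAt.eq_zero_of_fderiv_eq_zero {𝕜 E F : Type*} [NontriviallyNormedField 𝕜]
    [NormedAddCommGroup E] [NormedSpace 𝕜 E] [NormedAddCommGroup F] [NormedSpace 𝕜 F]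
    {P : E → F} {p : E} {g : 𝕜 → E} {t : 𝕜} {c : F} (hc : HasDerivAt (fun s => P (g s)) c t)
    (hP : DifferentiableAt 𝕜 P p) (hcrit : fderiv 𝕜 P p = 0) (hg : DifferentiableAt 𝕜 g t)
    (hgt : g t = p) : c = 0 := by
  subst hgt
  simpa [hcrit] using hc.unique (hP.hasFDerivAt.comp_hasDerivAt t hg.hasDerivAt)

section

variable {E G : Type*} [NormedAddCommGroup E] [NormedAddCommGroup G] [InnerProductSpace ℝ G]

-- The function `P(x, λ, y, γ)`.
noncomputable def lyapunov (f : E → ℝ) (F : E → G) (ρ : ℝ) (p : E × G × E × ℝ) : ℝ :=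
  f p.1 + ⟪p.2.1, F p.1⟫ + ρ / 2 * ‖F p.1‖ ^ 2 + p.2.2.2 / 2 * ‖p.1 - p.2.2.1‖ ^ 2

variable {f : E → ℝ} {F : E → G} {ρ : ℝ}

theorem hasDerivAt_lyapunov_prox_weight (x y : E) (lam : G) (γ : ℝ) :
    HasDerivAt (fun s => lyapunov f F ρ (x, lam, y, s)) (‖x - y‖ ^ 2 / 2) γ :=
  (((hasDerivAt_id γ).div_const 2).mul_const (‖x - y‖ ^ 2)).const_add
    (f x + ⟪lam, F x⟫ + ρ / 2 * ‖F x‖ ^ 2) |>.congr_deriv (by ring)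

theorem hasDerivAt_lyapunov_multiplier (x y : E) (lam μ : G) (γ : ℝ) :
    HasDerivAt (fun s : ℝ => lyapunov f F ρ (x, lam + s • μ, y, γ)) ⟪μ, F x⟫ 0 := by
  unfold lyapunov
  simp only [inner_add_left, real_inner_smul_left]
  simpa using (((hasDerivAt_id (0 : ℝ)).mul_const ⟪μ, F x⟫).const_add (f x + ⟪lam, F x⟫)).add_const
    (ρ / 2 * ‖F x‖ ^ 2 + γ / 2 * ‖x - y‖ ^ 2)

end

section

variable {E G : Type*} [NormedAddCommGroup E] [InnerProductSpace ℝ E]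
  [NormedAddCommGroup G] [InnerProductSpace ℝ G] {f : E → ℝ} {F : E → G} {ρ : ℝ}

theorem differentiableAt_lyapunov {p : E × G × E × ℝ} (hf : DifferentiableAt ℝ f p.1)
    (hF : DifferentiableAt ℝ F p.1) : DifferentiableAt ℝ (lyapunov f F ρ) p := by
  have hFx : DifferentiableAt ℝ (fun q : E × G × E × ℝ => F q.1) p := hF.comp p differentiableAt_fst
  have hinner : DifferentiableAt ℝ (fun q : E × G × E × ℝ => ⟪q.2.1, F q.1⟫) p :=
    differentiableAt_snd.fst.inner ℝ hFx
  have hpenalty : DifferentiableAt ℝ (fun q : E × G × E × ℝ => ‖F q.1‖ ^ 2) p := hFx.norm_sq ℝ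
  have hprox : DifferentiableAt ℝ (fun q : E × G × E × ℝ => ‖q.1 - q.2.2.1‖ ^ 2) p :=
    (differentiableAt_fst.sub differentiableAt_snd.snd.fst).norm_sq ℝ
  have hf' : DifferentiableAt ℝ (fun q : E × G × E × ℝ => f q.1) p := hf.comp p differentiableAt_fst
  unfold lyapunov
  fun_prop

theorem hasDerivAt_lyapunov_primal {x : E} (hf : DifferentiableAt ℝ f x)
    (hF : DifferentiableAt ℝ F x) (v y : E) (lam : G) (γ : ℝ) :
    HasDerivAt (fun s : ℝ => lyapunov f F ρ (x + s • v, lam, y, γ))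
      (fderiv ℝ f x v + ⟪lam, fderiv ℝ F x v⟫ + ρ * ⟪F x, fderiv ℝ F x v⟫ + γ * ⟪x - y, v⟫) 0 := by
  have hline : HasDerivAt (fun s : ℝ => x + s • v) v 0 := by
    simpa using ((hasDerivAt_id (0 : ℝ)).smul_const v).const_add x
  have hx : x = x + (0 : ℝ) • v := by simp
  have hf' := hf.hasFDerivAt.comp_hasDerivAt_of_eq 0 hline hx
  have hF' := hF.hasFDerivAt.comp_hasDerivAt_of_eq 0 hline hx
  refine (((hf'.add ((hasDerivAt_const 0 lam).inner ℝ hF')).add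
    (hF'.norm_sq.const_mul (ρ / 2))).add
    ((hline.sub_const y).norm_sq.const_mul (γ / 2))).congr_deriv ?_
  simp
  ring

def IsFirstOrderPoint [CompleteSpace E] [CompleteSpace G] (f : E → ℝ) (F : E → G) (x : E)
    (lam : G) : Prop :=
  F x = 0 ∧ gradient f x + ContinuousLinearMap.adjoint (fderiv ℝ F x) lam = 0

theorem isFirstOrderPoint_of_fderiv_lyapunov_eq_zero [CompleteSpace E] [CompleteSpace G]
    {x y : E} {lam : G} {γ : ℝ} (hf : DifferentiableAt ℝ f x) (hF : DifferentiableAt ℝ F x)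
    (hcrit : fderiv ℝ (lyapunov f F ρ) (x, lam, y, γ) = 0) :
    x = y ∧ IsFirstOrderPoint f F x lam := by
  have hP : DifferentiableAt ℝ (lyapunov f F ρ) (x, lam, y, γ) := differentiableAt_lyapunov hf hF
  have hxy : x = y := by
    have h := (hasDerivAt_lyapunov_prox_weight x y lam γ).eq_zero_of_fderiv_eq_zero hP hcrit
      (by fun_prop) rfl
    simpa [sub_eq_zero] using h
  have hFx : F x = 0 := by
    have h := (hasDerivAt_lyapunov_multiplier x y lam (F x) γ).eq_zero_of_fderiv_eq_zero hP hcrit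
      (by fun_prop) (by simp)
    simpa using h
  have hdir (v : E) : ⟪gradient f x + ContinuousLinearMap.adjoint (fderiv ℝ F x) lam, v⟫ = 0 := by
    have h := (hasDerivAt_lyapunov_primal hf hF v y lam γ).eq_zero_of_fderiv_eq_zero hP hcrit
      (by fun_prop) (by simp)
    simpa [inner_add_left, ContinuousLinearMap.adjoint_inner_left, hFx, sub_eq_zero.mpr hxy] using h
  exact ⟨hxy, hFx, inner_self_eq_zero.mp (hdir _)⟩

end

theorem stmt_11_general (n m : ℕ)
    (f : EuclideanSpace ℝ (Fin n) → ℝ)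
    (F : EuclideanSpace ℝ (Fin n) → EuclideanSpace ℝ (Fin m))
    (hf : Differentiable ℝ f) (hF : Differentiable ℝ F)
    (ρ : ℝ)
    (x y : EuclideanSpace ℝ (Fin n)) (lam : EuclideanSpace ℝ (Fin m))
    (γ : ℝ)
    (hcrit : fderiv ℝ
        (fun p : EuclideanSpace ℝ (Fin n) × EuclideanSpace ℝ (Fin m) ×
            EuclideanSpace ℝ (Fin n) × ℝ =>
          f p.1 + ⟪p.2.1, F p.1⟫ + ρ / 2 * ‖F p.1‖ ^ 2 +
            p.2.2.2 / 2 * ‖p.1 - p.2.2.1‖ ^ 2)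
        (x, lam, y, γ) = 0) :
    x = y ∧ F x = 0 ∧
      gradient f x + ContinuousLinearMap.adjoint (fderiv ℝ F x) lam = 0 :=
  isFirstOrderPoint_of_fderiv_lyapunov_eq_zero (hf x) (hF x) hcrit

/-- Critical points of the Lyapunov function `P(x,λ,y,γ)` with `γ > 0` yield
stationary points: if the Fréchet derivative of `P` vanishes at `(x,λ,y,γ)`,
then `x = y`, `F(x) = 0` and `∇f(x) + F'(x)ᵀλ = 0`. -/
theorem stmt_11 (n m : ℕ)
    (f : EuclideanSpace ℝ (Fin n) → ℝ)
    (F : EuclideanSpace ℝ (Fin n) → EuclideanSpace ℝ (Fin m))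
    (hf : Differentiable ℝ f) (hF : Differentiable ℝ F)
    (ρ : ℝ) (hρ : 0 < ρ)
    (x y : EuclideanSpace ℝ (Fin n)) (lam : EuclideanSpace ℝ (Fin m))
    (γ : ℝ) (hγ : 0 < γ)
    (hcrit : fderiv ℝ
        (fun p : EuclideanSpace ℝ (Fin n) × EuclideanSpace ℝ (Fin m) ×
            EuclideanSpace ℝ (Fin n) × ℝ =>
          f p.1 + ⟪p.2.1, F p.1⟫ + ρ / 2 * ‖F p.1‖ ^ 2 +
            p.2.2.2 / 2 * ‖p.1 - p.2.2.1‖ ^ 2)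
        (x, lam, y, γ) = 0) :
    x = y ∧ F x = 0 ∧
      gradient f x + ContinuousLinearMap.adjoint (fderiv ℝ F x) lam = 0 :=
  stmt_11_general n m f F hf hF ρ x y lam γ hcrit
end

section
/- Let (z_k)_{k≥0} be a sequence in a Euclidean space, (E_k)_{k≥1} a nonincreasing sequence of nonnegative reals with E_k → 0, (g_k)_{k≥1} a sequence of nonnegative reals, a, b > 0, τ > 0, k₁ ≥ 1, and φ : [0,τ) → [0,∞) continuous and concave with φ(0) = 0, φ continuously differentiable on (0,τ) with φ' > 0 on (0,τ). Suppose: (i) E_k − E_{k+1} ≥ a‖z_{k+1} − z_k‖² for all k ≥ 1; (ii) g_k ≤ b‖z_k − z_{k−1}‖ for all k ≥ 1; (iii) E_{k₁} < τ and for all k ≥ k₁ with E_k > 0 one has φ'(E_k)·g_k ≥ 1. Then ∑_{k≥1} ‖z_{k+1} − z_k‖ < ∞; in particular (z_k) converges. -/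
/-!
With `D k = ‖z (k + 1) - z k‖` and `Δ k = φ (E k) - φ (E (k + 1))`, concavity of `φ` gives
`φ' (E k) (E k - E (k + 1)) ≤ Δ k`, and the KŁ inequality together with `g k ≤ b D (k - 1)` turns
sufficient decrease into `a D k ² ≤ b D (k - 1) Δ k`. By AM-GM,
`2 D k ≤ D (k - 1) + (b / a) Δ k`; summing, the `Δ k` telescope and the `D` terms on the right
are absorbed by those on the left, so the partial sums of `D` are bounded by
`D (k₁ - 1) + (b / a) φ (E k₁)`.
-/

open Set Finset

theorem ConcaveOn.mul_sub_le_sub_of_hasDerivAt {S : Set ℝ} {f : ℝ → ℝ} {f' x y : ℝ}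
    (hf : ConcaveOn ℝ S f) (hx : x ∈ S) (hy : y ∈ S) (hyx : y ≤ x) (hf' : HasDerivAt f f' x) :
    f' * (x - y) ≤ f x - f y := by
  rcases hyx.eq_or_lt with rfl | hlt
  · simp
  · have hslope := hf.le_slope_of_hasDerivAt hy hx hlt hf'
    rwa [slope_def_field, le_div_iff₀ (sub_pos.2 hlt)] at hslope

theorem summable_of_two_mul_le_add_sub {D Φ : ℕ → ℝ} {N : ℕ} (hD : ∀ k, 0 ≤ D k)
    (hΦ : ∀ k ≥ N, 0 ≤ Φ k) (h : ∀ k ≥ N, 2 * D (k + 1) ≤ D k + (Φ k - Φ (k + 1))) :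
    Summable D := by
  have telescope :
      ∀ n, ∑ i ∈ range n, D (i + (N + 1)) + D (n + N) ≤ D N + (Φ N - Φ (n + N)) := by
    intro n
    induction n with
    | zero => simp
    | succ n ih =>
      have hn := h (n + N) (Nat.le_add_left N n)
      rw [sum_range_succ, ← add_assoc, add_right_comm n 1 N]
      linarith
  refine (summable_nat_add_iff (N + 1)).1 <|
    summable_of_sum_range_le (c := D N + Φ N) (fun _ => hD _) fun n => ?_
  linarith [telescope n, hD (n + N), hΦ (n + N) (Nat.le_add_left N n)]

/-- One step of the KŁ argument: `e, e'` are consecutive values of the gap, `d, d'` the current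
and previous step lengths and `g` the KŁ quantity at `e`. -/
theorem two_mul_le_add_of_kl_step {φ dφ : ℝ → ℝ} {τ a b e e' d d' g : ℝ} (ha : 0 < a)
    (hb : 0 < b) (hφconc : ConcaveOn ℝ (Ico 0 τ) φ)
    (hφderiv : ∀ s ∈ Ioo 0 τ, HasDerivAt φ (dφ s) s) (hdφpos : ∀ s ∈ Ioo 0 τ, 0 < dφ s)
    (he : e ∈ Ico 0 τ) (he' : 0 ≤ e') (he'e : e' ≤ e) (hdec : a * d ^ 2 ≤ e - e')
    (hd' : 0 ≤ d') (hg : g ≤ b * d') (hKL : 0 < e → 1 ≤ dφ e * g) :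
    2 * d ≤ d' + b / a * (φ e - φ e') := by
  suffices h : 0 ≤ φ e - φ e' ∧ a * d ^ 2 ≤ b * d' * (φ e - φ e') by
    refine two_mul_le_add_of_sq_le_mul hd' (mul_nonneg (div_pos hb ha).le h.1) ?_
    calc d ^ 2 = a * d ^ 2 / a := by field_simp
      _ ≤ b * d' * (φ e - φ e') / a := div_le_div_of_nonneg_right h.2 ha.le
      _ = d' * (b / a * (φ e - φ e')) := by ring
  rcases he.1.eq_or_lt with rfl | hpos
  · obtain rfl : e' = 0 := le_antisymm he'e he'
    simpa using hdec
  have hemem : e ∈ Ioo 0 τ := ⟨hpos, he.2⟩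
  have htangent := hφconc.mul_sub_le_sub_of_hasDerivAt he ⟨he', he'e.trans_lt he.2⟩ he'e
    (hφderiv e hemem)
  have hKLe := hKL hpos
  have hgpos : 0 < g := pos_of_mul_pos_right (one_pos.trans_le hKLe) (hdφpos e hemem).le
  have hΔ : 0 ≤ φ e - φ e' := (mul_nonneg (hdφpos e hemem).le (sub_nonneg.2 he'e)).trans htangent
  refine ⟨hΔ, ?_⟩
  calc a * d ^ 2 ≤ e - e' := hdec
    _ ≤ dφ e * g * (e - e') := le_mul_of_one_le_left (sub_nonneg.2 he'e) hKLe
    _ = g * (dφ e * (e - e')) := by ring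
    _ ≤ g * (φ e - φ e') := by gcongr
    _ ≤ b * d' * (φ e - φ e') := by gcongr

theorem stmt_12_general (d : ℕ) (z : ℕ → EuclideanSpace ℝ (Fin d))
    (E g : ℕ → ℝ) (a b τ : ℝ) (k₁ : ℕ)
    (ha : 0 < a) (hb : 0 < b) (hk₁ : 1 ≤ k₁)
    (hEnonneg : ∀ k ≥ 1, 0 ≤ E k)
    (hEmono : ∀ k ≥ 1, E (k + 1) ≤ E k)
    (φ dφ : ℝ → ℝ)
    (hφnonneg : ∀ s ∈ Set.Ico (0 : ℝ) τ, 0 ≤ φ s)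
    (hφconc : ConcaveOn ℝ (Set.Ico 0 τ) φ)
    (hφderiv : ∀ s ∈ Set.Ioo (0 : ℝ) τ, HasDerivAt φ (dφ s) s)
    (hdφpos : ∀ s ∈ Set.Ioo (0 : ℝ) τ, 0 < dφ s)
    (hsuffdec : ∀ k ≥ 1, a * ‖z (k + 1) - z k‖ ^ 2 ≤ E k - E (k + 1))
    (hgbound : ∀ k ≥ 1, g k ≤ b * ‖z k - z (k - 1)‖)
    (hEk₁ : E k₁ < τ)
    (hKL : ∀ k ≥ k₁, 0 < E k → 1 ≤ dφ (E k) * g k) :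
    Summable (fun k => ‖z (k + 1) - z k‖) ∧
      ∃ zs : EuclideanSpace ℝ (Fin d),
        Filter.Tendsto z Filter.atTop (nhds zs) := by
  have hE : ∀ k ≥ k₁, E k ∈ Ico 0 τ := fun k hk =>
    ⟨hEnonneg k (hk₁.trans hk), ((antitoneOn_nat_Ici_of_succ_le fun n hn => hEmono n
      (hk₁.trans hn)) (mem_Ici.2 le_rfl) (mem_Ici.2 hk) hk).trans_lt hEk₁⟩
  have hsum : Summable fun k => ‖z (k + 1) - z k‖ := by
    refine summable_of_two_mul_le_add_sub (N := k₁ - 1) (Φ := fun k => b / a * φ (E (k + 1)))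
      (fun _ => norm_nonneg _)
      (fun k hk => mul_nonneg (div_pos hb ha).le (hφnonneg _ (hE _ (by omega)))) fun k hk => ?_
    have hstep := two_mul_le_add_of_kl_step ha hb hφconc hφderiv hdφpos (hE (k + 1) (by omega))
      (hEnonneg (k + 2) (by omega)) (hEmono (k + 1) (by omega)) (hsuffdec (k + 1) (by omega))
      (norm_nonneg _) (hgbound (k + 1) (by omega)) (hKL (k + 1) (by omega))
    rw [Nat.add_sub_cancel] at hstep
    linarith
  refine ⟨hsum, cauchySeq_tendsto_of_complete (cauchySeq_of_summable_dist ?_)⟩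
  simpa only [dist_eq_norm, norm_sub_rev] using hsum

/-- Abstract finite-length property under the KŁ mechanism: if the gap sequence
`E_k` decreases sufficiently (`E_k − E_{k+1} ≥ a‖z_{k+1}−z_k‖²`), the KŁ quantity
`g_k` satisfies `g_k ≤ b‖z_k−z_{k−1}‖` and `φ'(E_k)·g_k ≥ 1` from some index on,
then `∑ ‖z_{k+1}−z_k‖ < ∞` and `(z_k)` converges. -/
theorem stmt_12 (d : ℕ) (z : ℕ → EuclideanSpace ℝ (Fin d))
    (E g : ℕ → ℝ) (a b τ : ℝ) (k₁ : ℕ)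
    (ha : 0 < a) (hb : 0 < b) (hτ : 0 < τ) (hk₁ : 1 ≤ k₁)
    (hEnonneg : ∀ k ≥ 1, 0 ≤ E k)
    (hEmono : ∀ k ≥ 1, E (k + 1) ≤ E k)
    (hEto0 : Filter.Tendsto E Filter.atTop (nhds 0))
    (hgnonneg : ∀ k ≥ 1, 0 ≤ g k)
    (φ dφ : ℝ → ℝ)
    (hφcont : ContinuousOn φ (Set.Ico 0 τ))
    (hφ0 : φ 0 = 0)
    (hφnonneg : ∀ s ∈ Set.Ico (0 : ℝ) τ, 0 ≤ φ s)
    (hφconc : ConcaveOn ℝ (Set.Ico 0 τ) φ)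
    (hφderiv : ∀ s ∈ Set.Ioo (0 : ℝ) τ, HasDerivAt φ (dφ s) s)
    (hdφcont : ContinuousOn dφ (Set.Ioo 0 τ))
    (hdφpos : ∀ s ∈ Set.Ioo (0 : ℝ) τ, 0 < dφ s)
    (hsuffdec : ∀ k ≥ 1, a * ‖z (k + 1) - z k‖ ^ 2 ≤ E k - E (k + 1))
    (hgbound : ∀ k ≥ 1, g k ≤ b * ‖z k - z (k - 1)‖)
    (hEk₁ : E k₁ < τ)
    (hKL : ∀ k ≥ k₁, 0 < E k → 1 ≤ dφ (E k) * g k) :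
    Summable (fun k => ‖z (k + 1) - z k‖) ∧
      ∃ zs : EuclideanSpace ℝ (Fin d),
        Filter.Tendsto z Filter.atTop (nhds zs) :=
  stmt_12_general d z E g a b τ k₁ ha hb hk₁ hEnonneg hEmono φ dφ hφnonneg hφconc hφderiv hdφpos
    hsuffdec hgbound hEk₁ hKL
end

section
/- Let (z_k)_{k≥0} be a sequence in a Euclidean space, (E_k)_{k≥1} a nonincreasing sequence of nonnegative reals with E_k → 0, (g_k)_{k≥1} nonnegative reals, a, b > 0, τ > 0, k₁ ≥ 1, and φ : [0,τ) → [0,∞) continuous and concave with φ(0) = 0, continuously differentiable on (0,τ) with φ' > 0 on (0,τ). Suppose: (i) E_k − E_{k+1} ≥ a‖z_{k+1} − z_k‖² for all k ≥ 1; (ii) g_k ≤ b‖z_k − z_{k−1}‖ for all k ≥ 1; (iii) E_{k₁} < τ and for all k ≥ k₁ with E_k > 0, φ'(E_k)·g_k ≥ 1. Then (z_k) converges to some limit z*, and there exists a constant C > 0 such that for all k ≥ k₁, ‖z_k − z*‖ ≤ C · max{ φ(E_k), √(E_{k−1}) }. -/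
/-!
Write `D k = ‖z (k + 1) - z k‖`. For `k ≥ k₁`, sufficient decrease and the gradient inequality
of the concave `φ` give `dφ (E k) · a D k ^ 2 ≤ φ (E k) - φ (E (k + 1))`, while the KŁ inequality
and the relative-error bound give `1 ≤ dφ (E k) · b D (k - 1)`. Multiplying,
`D k ^ 2 ≤ D (k - 1) · (b / a) (φ (E k) - φ (E (k + 1)))`, and AM–GM yields the recursion
`2 D k ≤ D (k - 1) + (b / a) (φ (E k) - φ (E (k + 1)))`. Telescoping bounds the tail
`∑_{i ≥ k} D i` by `D (k - 1) + (b / a) φ (E k)`, so `z` is Cauchy and `‖z k - z*‖` is at most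
that tail. Finally `D (k - 1) ≤ √(E (k - 1) / a)` as soon as `k - 1 ≥ 1`; the single index
`k = k₁` where this may fail is absorbed into the constant, using `φ (E k₁) > 0`, or, if
`E k₁ = 0`, that `z` is constant from `k₁` on.
-/

open Filter Topology

theorem ConcaveOn.mul_sub_le_sub_of_hasDerivAt_s13 {S : Set ℝ} {φ : ℝ → ℝ} {φ' u v : ℝ}
    (hφ : ConcaveOn ℝ S φ) (hu : u ∈ S) (hv : v ∈ S) (huv : u ≤ v) (hφ' : HasDerivAt φ φ' v) :
    φ' * (v - u) ≤ φ v - φ u := by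
  rcases huv.lt_or_eq with huv | rfl
  · have h := hφ.le_slope_of_hasDerivAt hu hv huv hφ'
    rwa [slope_def_field, le_div_iff₀ (sub_pos.2 huv)] at h
  · simp

theorem ConcaveOn.pos_of_hasDerivAt {S : Set ℝ} {φ : ℝ → ℝ} {φ' e : ℝ} (hφ : ConcaveOn ℝ S φ)
    (h0 : (0 : ℝ) ∈ S) (he : e ∈ S) (hepos : 0 < e) (hφ0 : 0 ≤ φ 0) (hφ' : HasDerivAt φ φ' e)
    (hφ'pos : 0 < φ') : 0 < φ e := by
  have h := hφ.mul_sub_le_sub_of_hasDerivAt_s13 h0 he hepos.le hφ'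
  rw [sub_zero] at h
  linarith [mul_pos hφ'pos hepos]

theorem two_mul_le_add_of_decrease_of_one_le_mul {a b p d d' e e' Δ : ℝ} (ha : 0 < a)
    (hb : 0 ≤ b) (hp : 0 ≤ p) (hd' : 0 ≤ d') (hdec : a * d ^ 2 ≤ e - e') (hgrad : p * (e - e') ≤ Δ)
    (hkl : 1 ≤ p * (b * d')) :
    2 * d ≤ d' + b / a * Δ := by
  have hΔ : 0 ≤ Δ := (mul_nonneg hp (by positivity : 0 ≤ a * d ^ 2)).trans
    ((mul_le_mul_of_nonneg_left hdec hp).trans hgrad)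
  refine two_mul_le_add_of_sq_le_mul hd' (by positivity) ?_
  have : a * d ^ 2 ≤ Δ * (b * d') := calc
    a * d ^ 2 ≤ a * d ^ 2 * (p * (b * d')) := le_mul_of_one_le_right (by positivity) hkl
    _ = p * (a * d ^ 2) * (b * d') := by ring
    _ ≤ p * (e - e') * (b * d') := by gcongr
    _ ≤ Δ * (b * d') := by gcongr
  rw [show d' * (b / a * Δ) = Δ * (b * d') / a by ring, le_div_iff₀' ha]
  exact this

theorem two_mul_le_add_of_kl {φ dφ : ℝ → ℝ} {τ a b e e' d d' g : ℝ}
    (hφconc : ConcaveOn ℝ (Set.Ico 0 τ) φ)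
    (hφderiv : ∀ s ∈ Set.Ioo (0 : ℝ) τ, HasDerivAt φ (dφ s) s)
    (hdφpos : ∀ s ∈ Set.Ioo (0 : ℝ) τ, 0 < dφ s)
    (ha : 0 < a) (hb : 0 ≤ b) (hd' : 0 ≤ d') (he' : 0 ≤ e') (hee' : e' ≤ e) (he : e < τ)
    (hdec : a * d ^ 2 ≤ e - e') (hg : g ≤ b * d') (hkl : 0 < e → 1 ≤ dφ e * g) :
    2 * d ≤ d' + b / a * (φ e - φ e') := by
  rcases (he'.trans hee').lt_or_eq with hpos | hzero
  · have hmem : e ∈ Set.Ioo 0 τ := ⟨hpos, he⟩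
    have hp := hdφpos e hmem
    refine two_mul_le_add_of_decrease_of_one_le_mul ha hb hp.le hd' hdec
      (hφconc.mul_sub_le_sub_of_hasDerivAt_s13 ⟨he', hee'.trans_lt he⟩ ⟨hpos.le, he⟩ hee'
        (hφderiv e hmem)) ((hkl hpos).trans ?_)
    gcongr
  · subst hzero
    obtain rfl : e' = 0 := le_antisymm hee' he'
    obtain rfl : d = 0 := pow_eq_zero_iff two_ne_zero |>.1 <|
      le_antisymm (nonpos_of_mul_nonpos_right (by simpa using hdec) ha) (sq_nonneg d)
    simpa using hd'

theorem le_sqrt_inv_mul_sqrt_of_mul_sq_le {a d e : ℝ} (ha : 0 < a) (h : a * d ^ 2 ≤ e) :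
    d ≤ √a⁻¹ * √e := by
  rw [← Real.sqrt_mul (inv_nonneg.2 ha.le)]
  refine Real.le_sqrt_of_sq_le ?_
  rw [inv_mul_eq_div, le_div_iff₀' ha]
  exact h

theorem sum_range_add_le_of_two_mul_le {D Φ : ℕ → ℝ} {c : ℝ} {k : ℕ}
    (hstep : ∀ j ≥ k, 2 * D j ≤ D (j - 1) + c * (Φ j - Φ (j + 1))) (n : ℕ) :
    ∑ i ∈ Finset.range n, D (k + i) + D (k + n - 1) ≤ D (k - 1) + c * (Φ k - Φ (k + n)) := by
  induction n with
  | zero => simp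
  | succ n ih =>
    have h := hstep (k + n) (Nat.le_add_right k n)
    rw [Finset.sum_range_succ, show k + (n + 1) - 1 = k + n by omega, ← add_assoc]
    linarith

theorem summable_and_tsum_le_of_two_mul_le {D Φ : ℕ → ℝ} {c : ℝ} {k₀ : ℕ}
    (hD : ∀ j, 0 ≤ D j) (hΦ : ∀ j ≥ k₀, 0 ≤ Φ j) (hc : 0 ≤ c)
    (hstep : ∀ j ≥ k₀, 2 * D j ≤ D (j - 1) + c * (Φ j - Φ (j + 1))) :
    Summable D ∧ ∀ k ≥ k₀, ∑' i, D (k + i) ≤ D (k - 1) + c * Φ k := by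
  have hpartial : ∀ k ≥ k₀, ∀ n, ∑ i ∈ Finset.range n, D (k + i) ≤ D (k - 1) + c * Φ k := by
    intro k hk n
    have h := sum_range_add_le_of_two_mul_le (fun j hj => hstep j (hk.trans hj)) n
    have : 0 ≤ c * Φ (k + n) := mul_nonneg hc (hΦ _ (hk.trans (Nat.le_add_right k n)))
    linarith [hD (k + n - 1)]
  refine ⟨?_, fun k hk => Real.tsum_le_of_sum_range_le (fun _ => hD _) (hpartial k hk)⟩
  refine (summable_nat_add_iff k₀).1 <|
    summable_of_sum_range_le (c := D (k₀ - 1) + c * Φ k₀) (fun _ => hD _) fun n => ?_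
  simpa only [add_comm] using hpartial k₀ le_rfl n

theorem exists_tendsto_norm_sub_le_tsum {F : Type*} [NormedAddCommGroup F] [CompleteSpace F]
    {z : ℕ → F} (hz : Summable fun k => ‖z (k + 1) - z k‖) :
    ∃ zs, Tendsto z atTop (𝓝 zs) ∧ ∀ k, ‖z k - zs‖ ≤ ∑' i, ‖z (k + i + 1) - z (k + i)‖ := by
  have hdist : ∀ k, dist (z k) (z (k + 1)) ≤ ‖z (k + 1) - z k‖ := fun k => (dist_eq_norm' _ _).le
  obtain ⟨zs, hzs⟩ := cauchySeq_tendsto_of_complete (cauchySeq_of_dist_le_of_summable _ hdist hz)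
  exact ⟨zs, hzs, fun k =>
    dist_eq_norm (z k) zs ▸ dist_le_tsum_of_dist_le_of_tendsto _ hdist hz hzs k⟩

theorem eq_of_sufficient_decrease_of_eq_zero {F : Type*} [NormedAddCommGroup F] {z : ℕ → F}
    {E : ℕ → ℝ} {a : ℝ} {k₀ : ℕ} (ha : 0 < a) (hE : ∀ k ≥ k₀, 0 ≤ E k)
    (hdec : ∀ k ≥ k₀, a * ‖z (k + 1) - z k‖ ^ 2 ≤ E k - E (k + 1)) (hEk₀ : E k₀ = 0) :
    ∀ k ≥ k₀, z k = z k₀ := by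
  suffices ∀ k ≥ k₀, E k = 0 ∧ z k = z k₀ from fun k hk => (this k hk).2
  intro k hk
  induction k, hk using Nat.le_induction with
  | base => exact ⟨hEk₀, rfl⟩
  | succ k hk ih =>
    have hk1 := hdec k hk
    rw [ih.1, zero_sub] at hk1
    have hE1 := hE (k + 1) (by omega)
    have hsq : a * ‖z (k + 1) - z k‖ ^ 2 = 0 := le_antisymm (by linarith) (by positivity)
    refine ⟨by linarith, ?_⟩
    rw [← ih.2, ← sub_eq_zero, ← norm_eq_zero]
    simpa [ha.ne'] using hsq

theorem exists_pos_le_mul_of_le_mul_of_gt {f M : ℕ → ℝ} {C₀ : ℝ} {k₀ : ℕ} (hC₀ : 0 < C₀)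
    (hM : ∀ k ≥ k₀, 0 ≤ M k) (hbound : ∀ k > k₀, f k ≤ C₀ * M k) (h₀ : f k₀ ≤ 0 ∨ 0 < M k₀) :
    ∃ C, 0 < C ∧ ∀ k ≥ k₀, f k ≤ C * M k := by
  refine ⟨C₀ + |f k₀ / M k₀|, by positivity, fun k hk => ?_⟩
  rcases hk.lt_or_eq with hk | rfl
  · refine (hbound k hk).trans ?_
    gcongr
    exacts [hM k hk.le, le_add_of_nonneg_right (abs_nonneg _)]
  rcases h₀ with h | h
  · exact h.trans (mul_nonneg (by positivity) (hM _ le_rfl))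
  calc f k₀ = f k₀ / M k₀ * M k₀ := (div_mul_cancel₀ _ h.ne').symm
    _ ≤ (C₀ + |f k₀ / M k₀|) * M k₀ := by
      gcongr
      exact (le_abs_self _).trans (le_add_of_nonneg_left hC₀.le)

theorem stmt_13_general (d : ℕ) (z : ℕ → EuclideanSpace ℝ (Fin d))
    (E g : ℕ → ℝ) (a b τ : ℝ) (k₁ : ℕ)
    (ha : 0 < a) (hb : 0 < b) (hk₁ : 1 ≤ k₁)
    (hEnonneg : ∀ k ≥ 1, 0 ≤ E k)
    (hEmono : ∀ k ≥ 1, E (k + 1) ≤ E k)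
    (φ dφ : ℝ → ℝ)
    (hφ0 : φ 0 = 0)
    (hφnonneg : ∀ s ∈ Set.Ico (0 : ℝ) τ, 0 ≤ φ s)
    (hφconc : ConcaveOn ℝ (Set.Ico 0 τ) φ)
    (hφderiv : ∀ s ∈ Set.Ioo (0 : ℝ) τ, HasDerivAt φ (dφ s) s)
    (hdφpos : ∀ s ∈ Set.Ioo (0 : ℝ) τ, 0 < dφ s)
    (hsuffdec : ∀ k ≥ 1, a * ‖z (k + 1) - z k‖ ^ 2 ≤ E k - E (k + 1))
    (hgbound : ∀ k ≥ 1, g k ≤ b * ‖z k - z (k - 1)‖)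
    (hEk₁ : E k₁ < τ)
    (hKL : ∀ k ≥ k₁, 0 < E k → 1 ≤ dφ (E k) * g k) :
    ∃ zs : EuclideanSpace ℝ (Fin d),
      Filter.Tendsto z Filter.atTop (nhds zs) ∧
      ∃ C : ℝ, 0 < C ∧ ∀ k ≥ k₁,
        ‖z k - zs‖ ≤ C * max (φ (E k)) (Real.sqrt (E (k - 1))) := by
  set D : ℕ → ℝ := fun k => ‖z (k + 1) - z k‖ with hD
  have hE_lt : ∀ k ≥ k₁, E k < τ := fun k hk =>
    (antitoneOn_nat_Ici_of_succ_le hEmono hk₁ (hk₁.trans hk) hk).trans_lt hEk₁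
  have hstep : ∀ j ≥ k₁, 2 * D j ≤ D (j - 1) + b / a * (φ (E j) - φ (E (j + 1))) := by
    intro j hj
    have h := two_mul_le_add_of_kl hφconc hφderiv hdφpos ha hb.le (norm_nonneg _)
      (hEnonneg _ (by omega)) (hEmono j (by omega)) (hE_lt j hj) (hsuffdec j (by omega))
      (hgbound j (by omega)) (hKL j hj)
    simpa only [hD, show j - 1 + 1 = j by omega] using h
  obtain ⟨hDsum, htail⟩ := summable_and_tsum_le_of_two_mul_le (fun _ => norm_nonneg _)
    (fun k hk => hφnonneg _ ⟨hEnonneg k (hk₁.trans hk), hE_lt k hk⟩) (by positivity) hstep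
  obtain ⟨zs, hzs, hdist⟩ := exists_tendsto_norm_sub_le_tsum hDsum
  refine ⟨zs, hzs, exists_pos_le_mul_of_le_mul_of_gt (C₀ := √a⁻¹ + b / a) (by positivity)
    (fun k _ => (Real.sqrt_nonneg _).trans (le_max_right _ _)) (fun k hk => ?_) ?_⟩
  · have hDk : D (k - 1) ≤ √a⁻¹ * √(E (k - 1)) := le_sqrt_inv_mul_sqrt_of_mul_sq_le ha <|
      (hsuffdec (k - 1) (by omega)).trans (by linarith [hEnonneg (k - 1 + 1) (by omega)])
    calc ‖z k - zs‖ ≤ D (k - 1) + b / a * φ (E k) := (hdist k).trans (htail k hk.le)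
      _ ≤ √a⁻¹ * max (φ (E k)) √(E (k - 1)) + b / a * max (φ (E k)) √(E (k - 1)) := by
        gcongr
        exacts [hDk.trans (by gcongr; exact le_max_right _ _), le_max_left _ _]
      _ = _ := by ring
  rcases (hEnonneg k₁ hk₁).lt_or_eq with hpos | hzero
  · exact Or.inr <| lt_max_of_lt_left <| hφconc.pos_of_hasDerivAt ⟨le_rfl, hpos.trans hEk₁⟩
      ⟨hpos.le, hEk₁⟩ hpos hφ0.ge (hφderiv _ ⟨hpos, hEk₁⟩) (hdφpos _ ⟨hpos, hEk₁⟩)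
  · have hconst := eq_of_sufficient_decrease_of_eq_zero ha
      (fun k hk => hEnonneg k (hk₁.trans hk)) (fun k hk => hsuffdec k (hk₁.trans hk)) hzero.symm
    rw [tendsto_nhds_unique hzs (tendsto_atTop_of_eventually_const hconst)]
    simp

/-- Pointwise convergence-rate estimate under the KŁ mechanism: the sequence
`(z_k)` converges to some `z*` and `‖z_k − z*‖ ≤ C·max{φ(E_k), √(E_{k−1})}`
for all `k ≥ k₁`. -/
theorem stmt_13 (d : ℕ) (z : ℕ → EuclideanSpace ℝ (Fin d))
    (E g : ℕ → ℝ) (a b τ : ℝ) (k₁ : ℕ)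
    (ha : 0 < a) (hb : 0 < b) (hτ : 0 < τ) (hk₁ : 1 ≤ k₁)
    (hEnonneg : ∀ k ≥ 1, 0 ≤ E k)
    (hEmono : ∀ k ≥ 1, E (k + 1) ≤ E k)
    (hEto0 : Filter.Tendsto E Filter.atTop (nhds 0))
    (hgnonneg : ∀ k ≥ 1, 0 ≤ g k)
    (φ dφ : ℝ → ℝ)
    (hφcont : ContinuousOn φ (Set.Ico 0 τ))
    (hφ0 : φ 0 = 0)
    (hφnonneg : ∀ s ∈ Set.Ico (0 : ℝ) τ, 0 ≤ φ s)
    (hφconc : ConcaveOn ℝ (Set.Ico 0 τ) φ)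
    (hφderiv : ∀ s ∈ Set.Ioo (0 : ℝ) τ, HasDerivAt φ (dφ s) s)
    (hdφcont : ContinuousOn dφ (Set.Ioo 0 τ))
    (hdφpos : ∀ s ∈ Set.Ioo (0 : ℝ) τ, 0 < dφ s)
    (hsuffdec : ∀ k ≥ 1, a * ‖z (k + 1) - z k‖ ^ 2 ≤ E k - E (k + 1))
    (hgbound : ∀ k ≥ 1, g k ≤ b * ‖z k - z (k - 1)‖)
    (hEk₁ : E k₁ < τ)
    (hKL : ∀ k ≥ k₁, 0 < E k → 1 ≤ dφ (E k) * g k) :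
    ∃ zs : EuclideanSpace ℝ (Fin d),
      Filter.Tendsto z Filter.atTop (nhds zs) ∧
      ∃ C : ℝ, 0 < C ∧ ∀ k ≥ k₁,
        ‖z k - zs‖ ≤ C * max (φ (E k)) (Real.sqrt (E (k - 1))) :=
  stmt_13_general d z E g a b τ k₁ ha hb hk₁ hEnonneg hEmono φ dφ hφ0 hφnonneg hφconc hφderiv hdφpos
    hsuffdec hgbound hEk₁ hKL
end

section
/- Let ν ∈ (0, 1/2), c̄ > 0, k₁ ≥ 1, and let (E_k)_{k≥0} be a nonincreasing sequence of nonnegative real numbers with E_{k₁} > 0 such that c̄·E_k^{2ν} ≤ E_{k−1} − E_k for all k > k₁. Then for all k ≥ k₁, E_k ≤ E_{k₁} / (1 + c̄·E_{k₁}^{2ν−1})^{k−k₁}; i.e. the sequence converges to zero at a linear (geometric) rate. -/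
/-- KŁ exponent `ν ∈ (0, 1/2)` case: linear (geometric) convergence rate.
If a nonincreasing nonnegative sequence with `E_{k₁} > 0` satisfies
`c̄·E_k^{2ν} ≤ E_{k−1} − E_k` for all `k > k₁`, then
`E_k ≤ E_{k₁} / (1 + c̄·E_{k₁}^{2ν−1})^{k−k₁}` for all `k ≥ k₁`. -/
theorem stmt_15 (ν cbar : ℝ) (k₁ : ℕ) (E : ℕ → ℝ)
    (hν : ν ∈ Set.Ioo (0 : ℝ) (1 / 2)) (hcbar : 0 < cbar) (hk₁ : 1 ≤ k₁)
    (hEnonneg : ∀ k, 0 ≤ E k)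
    (hEmono : ∀ k, E (k + 1) ≤ E k)
    (hEk₁pos : 0 < E k₁)
    (hrec : ∀ k > k₁, cbar * E k ^ (2 * ν) ≤ E (k - 1) - E k) :
    ∀ k ≥ k₁, E k ≤ E k₁ / (1 + cbar * E k₁ ^ (2 * ν - 1)) ^ (k - k₁) := by
  obtain ⟨hν0, hν2⟩ := hν
  set q : ℝ := 1 + cbar * E k₁ ^ (2 * ν - 1) with hq
  have hqpos : 0 < cbar * E k₁ ^ (2 * ν - 1) :=
    mul_pos hcbar (Real.rpow_pos_of_pos hEk₁pos _)
  have hq1 : 1 < q := by simpa [hq] using hqpos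
  have hq0 : 0 < q := lt_trans one_pos hq1
  -- monotone chain
  have hchain : ∀ k ≥ k₁, E k ≤ E k₁ := by
    intro k hk
    induction k with
    | zero => simpa [Nat.le_zero.mp hk]
    | succ n ih =>
      rcases Nat.lt_or_ge k₁ (n + 1) with h | h
      · exact le_trans (hEmono n) (ih (Nat.lt_succ_iff.mp h))
      · have : n + 1 = k₁ := le_antisymm h hk
        simp [this]
  intro k hk
  induction k with
  | zero =>
    have : k₁ = 0 := Nat.le_zero.mp hk
    simp [this]
  | succ n ih =>
    rcases Nat.lt_or_ge k₁ (n + 1) with h | h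
    · have hn : k₁ ≤ n := Nat.lt_succ_iff.mp h
      have ihn := ih hn
      have step : q * E (n + 1) ≤ E n := by
        rcases eq_or_lt_of_le (hEnonneg (n + 1)) with h0 | hpos
        · rw [← h0, mul_zero]; exact hEnonneg n
        · have hr := hrec (n + 1) h
          simp only [Nat.add_sub_cancel] at hr
          have hsplit : E (n+1) ^ (2 * ν) = E (n+1) * E (n+1) ^ (2 * ν - 1) := by
            rw [← Real.rpow_one_add' (le_of_lt hpos) (by nlinarith)]
            ring_nf
          have hmono : E k₁ ^ (2 * ν - 1) ≤ E (n+1) ^ (2 * ν - 1) := by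
            apply Real.rpow_le_rpow_of_nonpos hpos (hchain (n+1) (le_of_lt h))
            nlinarith
          have : cbar * (E (n+1) * E k₁ ^ (2 * ν - 1)) ≤ E n - E (n+1) := by
            refine le_trans ?_ hr
            rw [hsplit]
            have : E (n+1) * E k₁ ^ (2 * ν - 1) ≤ E (n+1) * E (n+1) ^ (2 * ν - 1) :=
              mul_le_mul_of_nonneg_left hmono (le_of_lt hpos)
            nlinarith
          nlinarith
      have hE : E (n + 1) ≤ E n / q := by
        rw [le_div_iff₀ hq0]; nlinarith
      calc E (n + 1) ≤ E n / q := hE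
        _ ≤ (E k₁ / q ^ (n - k₁)) / q := by
            gcongr
        _ = E k₁ / q ^ (n + 1 - k₁) := by
            rw [div_div, ← pow_succ]
            congr 2
            omega
    · have : n + 1 = k₁ := le_antisymm h hk
      simp [this]
end

section
/- Let ν ∈ (1/2, 1), c̄ > 0, k₁ ≥ 1, and let (E_k)_{k≥0} be a nonincreasing sequence of positive real numbers with E_k → 0 such that c̄·E_k^{2ν} ≤ E_{k−1} − E_k for all k > k₁. Then there exists μ > 0 such that for all k > k₁, E_k ≤ ( μ(k − k₁) + E_{k₁}^{1−2ν} )^{1/(1−2ν)}; i.e. the sequence converges to zero at the sublinear rate O( (k − k₁)^{−1/(2ν−1)} ). -/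
set_option maxHeartbeats 1000000 in
/-- Key per-step lemma: for `0 < a ≤ b` with `c * a^θ ≤ b - a` and `1 < θ`,
the increment of `x ↦ x^(1-θ)` is bounded below. -/
private lemma step_ineq {a b c θ : ℝ} (ha : 0 < a) (hab : a ≤ b)
    (hθ1 : 1 < θ) (hθ2 : θ ≤ 2) (hc : 0 < c) (hrec : c * a ^ θ ≤ b - a)
    (hcase : b ≤ 2 * a) :
    b ^ (1 - θ) + (θ - 1) * c * (1 / 2 : ℝ) ^ θ ≤ a ^ (1 - θ) := by
  have hb : 0 < b := lt_of_lt_of_le ha hab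
  set t : ℝ := a / b with ht_def
  have ht0 : 0 < t := div_pos ha hb
  have ht1 : t ≤ 1 := (div_le_one hb).mpr hab
  have ht_half : (1 / 2 : ℝ) ≤ t := by
    rw [ht_def, le_div_iff₀ hb]; linarith
  -- Bernoulli: t^(θ-1) ≤ 1 + (θ-1)(t-1)
  have hbern : t ^ (θ - 1) ≤ 1 + (θ - 1) * (t - 1) := by
    have := rpow_one_add_le_one_add_mul_self (s := t - 1) (by linarith)
      (p := θ - 1) (by linarith) (by linarith)
    simpa using this
  have hprod : t ^ (1 - θ) * t ^ (θ - 1) = 1 := by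
    rw [← Real.rpow_add ht0]; norm_num
  have htpow_pos : (0:ℝ) < t ^ (θ - 1) := Real.rpow_pos_of_pos ht0 _
  have htpow1_pos : (0:ℝ) < t ^ (1 - θ) := Real.rpow_pos_of_pos ht0 _
  -- hence t^(1-θ) ≥ 1 + (θ-1)(1-t)
  have hrev : 1 + (θ - 1) * (1 - t) ≤ t ^ (1 - θ) := by
    have hden : 0 < 1 + (θ - 1) * (t - 1) := by nlinarith
    nlinarith [mul_le_mul_of_nonneg_left hbern htpow1_pos.le,
      sq_nonneg ((θ - 1) * (t - 1)), hden, htpow1_pos]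
  -- a^(1-θ) = t^(1-θ) * b^(1-θ)
  have hsplit : a ^ (1 - θ) = t ^ (1 - θ) * b ^ (1 - θ) := by
    rw [ht_def, Real.div_rpow ha.le hb.le, div_mul_eq_mul_div,
      mul_div_assoc, div_self (ne_of_gt (Real.rpow_pos_of_pos hb _)), mul_one]
  have hbpow_pos : (0:ℝ) < b ^ (1 - θ) := Real.rpow_pos_of_pos hb _
  -- (1-t) * b^(1-θ) = (b-a) * b^(-θ)
  have hbsub : b ^ (1 - θ) = b ^ (-θ) * b := by
    rw [← Real.rpow_add_one (ne_of_gt hb)]; ring_nf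
  have haθ : a ^ θ * b ^ (-θ) = t ^ θ := by
    rw [ht_def, Real.div_rpow ha.le hb.le, Real.rpow_neg hb.le, div_eq_mul_inv]
  have htθ : (1 / 2 : ℝ) ^ θ ≤ t ^ θ :=
    Real.rpow_le_rpow (by norm_num) ht_half (by linarith)
  have hbnegθ : (0:ℝ) < b ^ (-θ) := Real.rpow_pos_of_pos hb _
  have key : (θ - 1) * c * (1 / 2 : ℝ) ^ θ ≤ (θ - 1) * (1 - t) * b ^ (1 - θ) := by
    have h1 : (1 - t) * b = b - a := by rw [ht_def]; field_simp
    have h2 : (1 - t) * b ^ (1 - θ) = (b - a) * b ^ (-θ) := by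
      rw [hbsub]; nlinarith [h1]
    have h3 : c * (a ^ θ * b ^ (-θ)) ≤ (b - a) * b ^ (-θ) := by
      nlinarith
    rw [haθ] at h3
    have h4 : c * (1/2:ℝ) ^ θ ≤ c * t ^ θ := by nlinarith
    have h5 : c * (1/2:ℝ) ^ θ ≤ (1 - t) * b ^ (1 - θ) := by
      rw [h2]; linarith
    nlinarith
  calc b ^ (1 - θ) + (θ - 1) * c * (1 / 2 : ℝ) ^ θ
      ≤ b ^ (1 - θ) + (θ - 1) * (1 - t) * b ^ (1 - θ) := by linarith
    _ = (1 + (θ - 1) * (1 - t)) * b ^ (1 - θ) := by ring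
    _ ≤ t ^ (1 - θ) * b ^ (1 - θ) := by nlinarith
    _ = a ^ (1 - θ) := hsplit.symm

/-- KŁ exponent `ν ∈ (1/2, 1)` case: sublinear convergence rate. If a
nonincreasing sequence of positive reals with `E_k → 0` satisfies
`c̄·E_k^{2ν} ≤ E_{k−1} − E_k` for all `k > k₁`, then there exists `μ > 0` with
`E_k ≤ (μ(k−k₁) + E_{k₁}^{1−2ν})^{1/(1−2ν)}` for all `k > k₁`. -/
theorem stmt_16 (ν cbar : ℝ) (k₁ : ℕ) (E : ℕ → ℝ)
    (hν : ν ∈ Set.Ioo (1 / 2 : ℝ) 1) (hcbar : 0 < cbar) (hk₁ : 1 ≤ k₁)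
    (hEpos : ∀ k, 0 < E k)
    (hEmono : ∀ k, E (k + 1) ≤ E k)
    (hEto0 : Filter.Tendsto E Filter.atTop (nhds 0))
    (hrec : ∀ k > k₁, cbar * E k ^ (2 * ν) ≤ E (k - 1) - E k) :
    ∃ μ : ℝ, 0 < μ ∧ ∀ k > k₁,
      E k ≤ (μ * ((k : ℝ) - (k₁ : ℝ)) + E k₁ ^ (1 - 2 * ν)) ^ (1 / (1 - 2 * ν)) := by
  obtain ⟨hν1, hν2⟩ := hν
  set θ : ℝ := 2 * ν with hθdef
  have hθ1 : 1 < θ := by rw [hθdef]; linarith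
  have hθ2 : θ < 2 := by rw [hθdef]; linarith
  have hEanti : Antitone E := antitone_nat_of_succ_le hEmono
  have hpow2 : (1:ℝ) < (2:ℝ) ^ (θ - 1) :=
    (Real.one_lt_rpow_iff_of_pos (by norm_num)).mpr (Or.inl ⟨by norm_num, by linarith⟩)
  have hEk₁pow : (0:ℝ) < E k₁ ^ (1 - θ) := Real.rpow_pos_of_pos (hEpos k₁) _
  set μ₁ : ℝ := (θ - 1) * cbar * (1 / 2 : ℝ) ^ θ with hμ₁def
  set μ₂ : ℝ := ((2:ℝ) ^ (θ - 1) - 1) * E k₁ ^ (1 - θ) with hμ₂def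
  have hμ₁pos : 0 < μ₁ := by
    have h : (0:ℝ) < (1/2:ℝ) ^ θ := Real.rpow_pos_of_pos (by norm_num) _
    rw [hμ₁def]; exact mul_pos (mul_pos (by linarith) hcbar) h
  have hμ₂pos : 0 < μ₂ := by
    rw [hμ₂def]; exact mul_pos (by linarith) hEk₁pow
  refine ⟨min μ₁ μ₂, lt_min hμ₁pos hμ₂pos, ?_⟩
  set μ : ℝ := min μ₁ μ₂ with hμdef
  have hμpos : 0 < μ := lt_min hμ₁pos hμ₂pos
  -- per-step inequality
  have hstep : ∀ k > k₁, E (k - 1) ^ (1 - θ) + μ ≤ E k ^ (1 - θ) := by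
    intro k hk
    have hk1 : k₁ ≤ k - 1 := Nat.le_sub_one_of_lt hk
    have hab : E k ≤ E (k - 1) := hEanti (Nat.sub_le k 1)
    have hrk := hrec k hk
    by_cases hcase : E (k - 1) ≤ 2 * E k
    · have := step_ineq (hEpos k) hab hθ1 hθ2.le hcbar hrk hcase
      have hμle : μ ≤ μ₁ := min_le_left _ _
      rw [hμ₁def] at hμle
      linarith
    · push_neg at hcase
      -- E k ≤ E (k-1) / 2, so E k ^ (1-θ) ≥ (E (k-1)/2) ^ (1-θ) = 2^(θ-1) * E(k-1)^(1-θ)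
      have hhalf : E k ≤ E (k - 1) / 2 := by linarith
      have h1 : (E (k - 1) / 2) ^ (1 - θ) ≤ E k ^ (1 - θ) :=
        Real.rpow_le_rpow_of_nonpos (hEpos k) hhalf (by linarith)
      have h2 : (E (k - 1) / 2) ^ (1 - θ)
          = E (k - 1) ^ (1 - θ) * ((2:ℝ) ^ (1 - θ))⁻¹ := by
        rw [div_eq_mul_inv, Real.mul_rpow (hEpos (k-1)).le (by norm_num),
          Real.inv_rpow (by norm_num)]
      have h3 : ((2:ℝ) ^ (1 - θ))⁻¹ = (2:ℝ) ^ (θ - 1) := by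
        rw [← Real.rpow_neg (by norm_num)]; ring_nf
      have h4 : E (k - 1) ^ (1 - θ) * (2:ℝ) ^ (θ - 1) ≤ E k ^ (1 - θ) := by
        rw [← h3, ← h2]; exact h1
      have hE1pos : (0:ℝ) < E (k - 1) ^ (1 - θ) := Real.rpow_pos_of_pos (hEpos _) _
      have hE1ge : E k₁ ^ (1 - θ) ≤ E (k - 1) ^ (1 - θ) :=
        Real.rpow_le_rpow_of_nonpos (hEpos _) (hEanti hk1) (by linarith)
      have hμle : μ ≤ μ₂ := min_le_right _ _
      rw [hμ₂def] at hμle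
      nlinarith
  -- induction: ∀ k > k₁, μ*(k-k₁) + E k₁^(1-θ) ≤ E k^(1-θ)
  have hind : ∀ k, k₁ < k → μ * ((k : ℝ) - (k₁ : ℝ)) + E k₁ ^ (1 - θ) ≤ E k ^ (1 - θ) := by
    intro k hk
    induction k, hk using Nat.le_induction with
    | base =>
      have h := hstep (k₁ + 1) (Nat.lt_succ_self k₁)
      simp only [Nat.add_sub_cancel] at h
      push_cast
      linarith
    | succ n hn ih =>
      have h := hstep (n + 1) (by omega)
      simp only [Nat.add_sub_cancel] at h
      push_cast
      push_cast at ih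
      linarith
  intro k hk
  have h := hind k hk
  have hA : (0:ℝ) < μ * ((k : ℝ) - (k₁ : ℝ)) + E k₁ ^ (1 - θ) := by
    have : (1:ℝ) ≤ (k : ℝ) - (k₁ : ℝ) := by
      have : (k₁:ℝ) + 1 ≤ (k:ℝ) := by exact_mod_cast hk
      linarith
    nlinarith
  have hmain := Real.rpow_le_rpow_of_nonpos hA h
    (z := 1 / (1 - θ)) (by
      apply div_nonpos_of_nonneg_of_nonpos <;> [norm_num; linarith])
  have hEk : (E k ^ (1 - θ)) ^ (1 / (1 - θ)) = E k := by
    rw [← Real.rpow_mul (hEpos k).le, mul_one_div,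
      div_self (by linarith : (1:ℝ) - θ ≠ 0), Real.rpow_one]
  rw [hEk] at hmain
  exact hmain
end
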